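/- arXiv:2202.03796 — 5 statements merged into one kernel-verified Lean document; each statement's English description precedes it below -/
import Mathlib

section
/- For every finitely generated group G, the conjugation action of G on L/[L,L] is nilpotent: there exists d ∈ ℕ such that [ℓ, ι₁(g₁), …, ι₁(g_d)] ∈ [L,L] for all ℓ ∈ L and all g₁, …, g_d ∈ G. -/
open Monoid
open scoped commutatorElement

/-- The relations defining the Sidki double. -/
def sidkiRels (G : Type*) [Group G] : Subgroup (Coprod G G) :=
  Subgroup.normalClosure
    { x : Coprod G G | ∃ g : G, x = ⁅(Coprod.inl g : Coprod G G), (Coprod.inr g : Coprod G G)⁆ }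

instance sidkiRels_normal (G : Type*) [Group G] : (sidkiRels G).Normal := by
  unfold sidkiRels; infer_instance

/-- The Sidki double 𝔛(G). -/
def SidkiDouble (G : Type*) [Group G] : Type _ := Coprod G G ⧸ sidkiRels G

instance (G : Type*) [Group G] : Group (SidkiDouble G) :=
  QuotientGroup.Quotient.group _

/-- The first canonical map `G → 𝔛(G)`. -/
def xi1 (G : Type*) [Group G] : G →* SidkiDouble G :=
  (QuotientGroup.mk' (sidkiRels G)).comp Coprod.inl

/-- The second canonical map `G → 𝔛(G)`. -/
def xi2 (G : Type*) [Group G] : G →* SidkiDouble G :=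
  (QuotientGroup.mk' (sidkiRels G)).comp Coprod.inr

def sidkiRhoFree (G : Type*) [Group G] : Coprod G G →* G × G × G :=
  Coprod.lift ((MonoidHom.id G).prod ((MonoidHom.id G).prod 1))
    ((1 : G →* G).prod ((MonoidHom.id G).prod (MonoidHom.id G)))

lemma sidkiRels_le_ker_rhoFree (G : Type*) [Group G] :
    sidkiRels G ≤ (sidkiRhoFree G).ker := by
  apply Subgroup.normalClosure_le_normal
  rintro y ⟨g, rfl⟩
  simp only [Set.mem_setOf_eq, SetLike.mem_coe, MonoidHom.mem_ker, commutatorElement_def,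
    map_mul, map_inv, sidkiRhoFree, Coprod.lift_apply_inl, Coprod.lift_apply_inr]
  ext <;> simp <;> group

/-- The homomorphism ρ : 𝔛(G) → G × G × G, ρ(g) = (g,g,1), ρ(ḡ) = (1,g,g). -/
def sidkiRho (G : Type*) [Group G] : SidkiDouble G →* G × G × G :=
  QuotientGroup.lift (sidkiRels G) (sidkiRhoFree G)
    (fun x hx => MonoidHom.mem_ker.mp (sidkiRels_le_ker_rhoFree G hx))

def sidkiPrFree (G : Type*) [Group G] : Coprod G G →* G :=
  Coprod.lift (MonoidHom.id G) (MonoidHom.id G)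

lemma sidkiRels_le_ker_prFree (G : Type*) [Group G] :
    sidkiRels G ≤ (sidkiPrFree G).ker := by
  apply Subgroup.normalClosure_le_normal
  rintro y ⟨g, rfl⟩
  simp only [Set.mem_setOf_eq, SetLike.mem_coe, MonoidHom.mem_ker, commutatorElement_def,
    map_mul, map_inv, sidkiPrFree, Coprod.lift_apply_inl, Coprod.lift_apply_inr,
    MonoidHom.id_apply]
  group

/-- The homomorphism 𝔛(G) → G sending both g and ḡ to g. -/
def sidkiPr (G : Type*) [Group G] : SidkiDouble G →* G :=
  QuotientGroup.lift (sidkiRels G) (sidkiPrFree G)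
    (fun x hx => MonoidHom.mem_ker.mp (sidkiRels_le_ker_prFree G hx))

/-- W = ker ρ. -/
def sidkiW (G : Type*) [Group G] : Subgroup (SidkiDouble G) := (sidkiRho G).ker

/-- L = ker (𝔛(G) → G). -/
def sidkiL (G : Type*) [Group G] : Subgroup (SidkiDouble G) := (sidkiPr G).ker

/-- Left-normed iterated commutator `[a, b₁, …, b_k]`. -/
def itComm {H : Type*} [Group H] : H → List H → H
  | a, [] => a
  | a, b :: l => itComm ⁅a, b⁆ l

def IsVirtuallyNilpotent (H : Type*) [Group H] : Prop :=
  ∃ K : Subgroup H, K.FiniteIndex ∧ Group.IsNilpotent K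

namespace SidkiProof

variable {G : Type*} [Group G]

lemma sidkiPr_xi1 (g : G) : sidkiPr G (xi1 G g) = g := rfl

lemma sidkiPr_xi2 (g : G) : sidkiPr G (xi2 G g) = g := rfl

lemma sidki_comm (g : G) : Commute (xi1 G g) (xi2 G g) := by
  rw [← commutatorElement_eq_one_iff_commute]
  have h : (⁅(Coprod.inl g : Coprod G G), (Coprod.inr g : Coprod G G)⁆) ∈ sidkiRels G :=
    Subgroup.subset_normalClosure ⟨g, rfl⟩
  have h2 : (QuotientGroup.mk' (sidkiRels G)) ⁅Coprod.inl g, Coprod.inr g⁆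
      = ⁅xi1 G g, xi2 G g⁆ := map_commutatorElement _ _ _
  rw [← h2]
  exact (QuotientGroup.eq_one_iff _).mpr h

instance : (sidkiL G).Normal := (sidkiPr G).normal_ker

/-- `d(g) = ι₁(g)⁻¹ ι₂(g)`. -/
def sd (g : G) : SidkiDouble G := (xi1 G g)⁻¹ * xi2 G g

lemma sd_mem (g : G) : sd g ∈ sidkiL G := by
  simp [sidkiL, MonoidHom.mem_ker, sd, map_mul, map_inv, sidkiPr_xi1, sidkiPr_xi2]

lemma sd_one : sd (1 : G) = 1 := by simp [sd]

lemma sd_cocycle (u v : G) :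
    sd (u * v) = (xi1 G v)⁻¹ * sd u * xi1 G v * sd v := by
  simp only [sd, map_mul]
  group

lemma sd_fix (u : G) : (xi1 G u)⁻¹ * sd u * xi1 G u = sd u := by
  have hc : Commute (xi1 G u) (sd u) :=
    ((Commute.refl (xi1 G u)).inv_right).mul_right (sidki_comm u)
  rw [mul_assoc, ← hc.eq, inv_mul_cancel_left]

/-- The generating set of `L`: conjugates of the `d(g)`. -/
def genSet (G : Type*) [Group G] : Set (SidkiDouble G) :=
  {z | ∃ u h : G, z = (xi1 G h)⁻¹ * sd u * xi1 G h}

lemma conj_mem_genClosure {a : SidkiDouble G}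
    (ha : a ∈ Subgroup.closure (genSet G)) (h : G) :
    (xi1 G h)⁻¹ * a * xi1 G h ∈ Subgroup.closure (genSet G) := by
  induction ha using Subgroup.closure_induction with
  | mem z hz =>
      obtain ⟨u, k, rfl⟩ := hz
      apply Subgroup.subset_closure
      exact ⟨u, k * h, by rw [map_mul]; group⟩
  | one => simpa using one_mem _
  | mul x y hx hy px py =>
      have : (xi1 G h)⁻¹ * (x * y) * xi1 G h
          = ((xi1 G h)⁻¹ * x * xi1 G h) * ((xi1 G h)⁻¹ * y * xi1 G h) := by group
      rw [this]; exact mul_mem px py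
  | inv x hx px =>
      have : (xi1 G h)⁻¹ * x⁻¹ * xi1 G h = ((xi1 G h)⁻¹ * x * xi1 G h)⁻¹ := by group
      rw [this]; exact inv_mem px

def Pgen (w : SidkiDouble G) : Prop :=
  (xi1 G (sidkiPr G w))⁻¹ * w ∈ Subgroup.closure (genSet G)

lemma Pgen_mul {w₁ w₂ : SidkiDouble G} (p₁ : Pgen w₁) (p₂ : Pgen w₂) : Pgen (w₁ * w₂) := by
  unfold Pgen at *
  have key : (xi1 G (sidkiPr G (w₁ * w₂)))⁻¹ * (w₁ * w₂)
      = ((xi1 G (sidkiPr G w₂))⁻¹ * ((xi1 G (sidkiPr G w₁))⁻¹ * w₁)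
          * xi1 G (sidkiPr G w₂)) * ((xi1 G (sidkiPr G w₂))⁻¹ * w₂) := by
    rw [map_mul, map_mul]; group
  rw [key]
  exact mul_mem (conj_mem_genClosure p₁ _) p₂

lemma L_le_genClosure : sidkiL G ≤ Subgroup.closure (genSet G) := by
  have main : ∀ w : SidkiDouble G, Pgen w := by
    intro w
    obtain ⟨z, rfl⟩ := QuotientGroup.mk'_surjective (sidkiRels G) w
    induction z using Coprod.induction_on with
    | inl g =>
        show Pgen (xi1 G g)
        unfold Pgen
        rw [sidkiPr_xi1]
        simpa using one_mem _
    | inr g =>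
        show Pgen (xi2 G g)
        unfold Pgen
        rw [sidkiPr_xi2]
        exact Subgroup.subset_closure ⟨g, 1, by simp [sd]⟩
    | mul z₁ z₂ p₁ p₂ =>
        have e : (QuotientGroup.mk' (sidkiRels G) (z₁ * z₂) : SidkiDouble G)
            = (QuotientGroup.mk' (sidkiRels G) z₁ : SidkiDouble G)
              * (QuotientGroup.mk' (sidkiRels G) z₂ : SidkiDouble G) := map_mul _ _ _
        show Pgen (QuotientGroup.mk' (sidkiRels G) (z₁ * z₂) : SidkiDouble G)
        rw [e]
        exact Pgen_mul p₁ p₂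
  intro ℓ hℓ
  have h1 : sidkiPr G ℓ = 1 := hℓ
  have h2 := main ℓ
  unfold Pgen at h2
  rw [h1] at h2
  simpa using h2

----------------- Q level -----------------

variable (G) in
/-- The quotient `𝔛(G)/[L,L]`. -/
abbrev QS := SidkiDouble G ⧸ (⁅sidkiL G, sidkiL G⁆ : Subgroup (SidkiDouble G))

variable (G) in
abbrev piX : SidkiDouble G →* QS G := QuotientGroup.mk' _

variable (G) in
/-- The image of `L` in `Q`. -/
def MQ : Subgroup (QS G) := (sidkiL G).map (piX G)

instance : (MQ G).Normal :=
  Subgroup.Normal.map inferInstance _ (QuotientGroup.mk'_surjective _)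

lemma mq_comm {a b : QS G} (ha : a ∈ MQ G) (hb : b ∈ MQ G) : a * b = b * a := by
  obtain ⟨l₁, h₁, rfl⟩ := ha
  obtain ⟨l₂, h₂, rfl⟩ := hb
  have hmem : l₁ * l₂ * l₁⁻¹ * l₂⁻¹ ∈ (⁅sidkiL G, sidkiL G⁆ : Subgroup (SidkiDouble G)) := by
    have : l₁ * l₂ * l₁⁻¹ * l₂⁻¹ = ⁅l₁, l₂⁆ := by
      rw [commutatorElement_def]
    rw [this]
    exact Subgroup.commutator_mem_commutator h₁ h₂
  have h1 : piX G (l₁ * l₂ * l₁⁻¹ * l₂⁻¹) = 1 := (QuotientGroup.eq_one_iff _).mpr hmem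
  simp only [map_mul, map_inv] at h1
  calc piX G l₁ * piX G l₂
      = (piX G l₁ * piX G l₂ * (piX G l₁)⁻¹ * (piX G l₂)⁻¹) * (piX G l₂ * piX G l₁) := by
        group
    _ = piX G l₂ * piX G l₁ := by rw [h1]; group

instance : CommGroup ↥(MQ G) :=
  { (inferInstance : Group ↥(MQ G)) with
    mul_comm := fun a b => Subtype.ext (mq_comm a.2 b.2) }

variable (G) in
/-- The abelianised module, additively. -/
abbrev AA := Additive ↥(MQ G)

/-- Conjugation `m ↦ c⁻¹ m c` as an endomorphism of `M`. -/
def conjM (c : QS G) : ↥(MQ G) →* ↥(MQ G) where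
  toFun m := ⟨c⁻¹ * (↑m : QS G) * c, by
    simpa using (inferInstance : (MQ G).Normal).conj_mem (↑m) m.2 c⁻¹⟩
  map_one' := by ext; simp
  map_mul' m₁ m₂ := by ext; push_cast; group

lemma conjM_mul (c c' : QS G) : conjM (c * c') = (conjM c').comp (conjM c) := by
  ext m
  simp only [conjM, MonoidHom.coe_mk, OneHom.coe_mk, MonoidHom.comp_apply]
  group

lemma conjM_one : conjM (1 : QS G) = MonoidHom.id _ := by
  ext m; simp [conjM]

/-- Conjugation as an additive endomorphism. -/
def conjA (c : QS G) : AA G →+ AA G := MonoidHom.toAdditive (conjM c)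

lemma conjA_comp (c c' : QS G) (a : AA G) :
    conjA c' (conjA c a) = conjA (c * c') a := by
  simp [conjA, conjM_mul]

lemma conjA_one (a : AA G) : conjA (1 : QS G) a = a := by
  simp [conjA, conjM_one]

/-- `T_c = conjugation by c minus identity`. -/
def TT (c : QS G) : AA G →+ AA G := conjA c - AddMonoidHom.id _

lemma TT_apply (c : QS G) (a : AA G) : TT c a = conjA c a - a := rfl

lemma TT_one (a : AA G) : TT (1 : QS G) a = 0 := by
  simp [TT_apply, conjA_one]

lemma TT_mul (c c' : QS G) (a : AA G) :
    TT (c * c') a = TT c a + TT c' a + TT c' (TT c a) := by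
  simp only [TT_apply, map_sub, conjA_comp]
  abel

lemma TT_conj (c w : QS G) (a : AA G) :
    TT c (conjA w a) = conjA w (TT (w * c * w⁻¹) a) := by
  rw [TT_apply, TT_apply, map_sub, conjA_comp, conjA_comp,
    show w * c * w⁻¹ * w = w * c from by group]

----------------- delta and the key identity -----------------

variable (G) in
abbrev xqh : G →* QS G := (piX G).comp (xi1 G)

/-- The class of `d(u)` in the module. -/
def δd (u : G) : AA G :=
  Additive.ofMul (⟨piX G (sd u), Subgroup.mem_map_of_mem _ (sd_mem u)⟩ : ↥(MQ G))

lemma δd_one' : δd (1 : G) = 0 := by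
  have h : piX G (sd (1 : G)) = 1 := by rw [sd_one, map_one]
  exact congrArg Additive.ofMul (Subtype.ext h)

lemma δd_cocycle (u v : G) : δd (u * v) = conjA (xqh G v) (δd u) + δd v := by
  unfold δd conjA
  apply Subtype.ext
  show piX G (sd (u * v)) = (xqh G v)⁻¹ * piX G (sd u) * xqh G v * piX G (sd v)
  rw [sd_cocycle u v]
  simp only [map_mul, map_inv]
  rfl

lemma δd_fix (u : G) : conjA (xqh G u) (δd u) = δd u := by
  unfold δd conjA
  apply Subtype.ext
  show (xqh G u)⁻¹ * piX G (sd u) * xqh G u = piX G (sd u)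
  have := congrArg (piX G) (sd_fix u)
  simpa [map_mul, map_inv] using this

lemma δd_fix' (u : G) : conjA (xqh G u⁻¹) (δd u) = δd u := by
  have h := congrArg (conjA (xqh G u⁻¹)) (δd_fix u)
  rw [conjA_comp, ← map_mul, mul_inv_cancel, map_one, conjA_one] at h
  exact h.symm

lemma δd_inv (u : G) : δd u⁻¹ = - δd u := by
  have h := δd_cocycle u u⁻¹
  rw [mul_inv_cancel, δd_one', δd_fix'] at h
  exact eq_neg_of_add_eq_zero_right h.symm

lemma P3 (u v : G) : conjA (xqh G u) (δd (u * v)) = δd u + δd v := by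
  have h1 : conjA (xqh G (u * v)) (δd (u * v)) = δd (u * v) := δd_fix _
  have h2 := congrArg (conjA (xqh G v⁻¹)) h1
  rw [conjA_comp, ← map_mul] at h2
  have e : u * v * v⁻¹ = u := by group
  rw [e] at h2
  rw [h2, δd_cocycle u v, map_add, conjA_comp, ← map_mul, mul_inv_cancel, map_one]
  rw [conjA_one, δd_fix']

lemma act_formula (g u : G) : conjA (xqh G g) (δd u) = δd g + δd (g⁻¹ * u) := by
  have := P3 g (g⁻¹ * u)
  rwa [show g * (g⁻¹ * u) = u from by group] at this

lemma δd_sq (g : G) : δd (g * g) = δd g + δd g := by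
  rw [δd_cocycle g g, δd_fix]

lemma keycore (g u : G) : TT (xqh G g) (TT (xqh G g) (δd u)) = 0 := by
  have expand : TT (xqh G g) (TT (xqh G g) (δd u))
      = conjA (xqh G (g * g)) (δd u) - conjA (xqh G g) (δd u)
        - conjA (xqh G g) (δd u) + δd u := by
    rw [TT_apply, TT_apply, map_sub, conjA_comp, ← map_mul]
    abel
  rw [expand, act_formula, act_formula]
  have e1 : (g * g)⁻¹ * u = g⁻¹ * (g⁻¹ * u) := by group
  have e2 : δd u = conjA (xqh G (g⁻¹ * u)) (δd g) + δd (g⁻¹ * u) := by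
    have h := δd_cocycle g (g⁻¹ * u)
    rwa [show g * (g⁻¹ * u) = u from by group] at h
  have e3 : δd (g⁻¹ * (g⁻¹ * u)) = - conjA (xqh G (g⁻¹ * u)) (δd g) + δd (g⁻¹ * u) := by
    have h := δd_cocycle g⁻¹ (g⁻¹ * u)
    rwa [δd_inv, map_neg] at h
  rw [e1, δd_sq, e3, e2]
  abel

----------------- keyfact for all of M -----------------

lemma genClosure_le_L : Subgroup.closure (genSet G) ≤ sidkiL G := by
  rw [Subgroup.closure_le]
  rintro z ⟨u, k, rfl⟩
  have hsd : sidkiPr G (sd u) = 1 := sd_mem u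
  simp only [SetLike.mem_coe, sidkiL, MonoidHom.mem_ker, map_mul, map_inv, sidkiPr_xi1, hsd]
  group

lemma keyfact (g : G) (a : AA G) : TT (xqh G g) (TT (xqh G g) a) = 0 := by
  obtain ⟨ℓ, hℓ, hval⟩ := (Additive.toMul a).2
  have hcl : ℓ ∈ Subgroup.closure (genSet G) := L_le_genClosure hℓ
  have ha : a = Additive.ofMul (⟨piX G ℓ,
      Subgroup.mem_map_of_mem _ (genClosure_le_L hcl)⟩ : ↥(MQ G)) :=
    congrArg Additive.ofMul (Subtype.ext hval.symm)
  rw [ha]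
  clear ha hval hℓ a
  revert g
  induction hcl using Subgroup.closure_induction with
  | mem z hz =>
      intro g
      obtain ⟨u, k, rfl⟩ := hz
      have hz' : ((xi1 G k)⁻¹ * sd u * xi1 G k) ∈ sidkiL G :=
        genClosure_le_L (Subgroup.subset_closure ⟨u, k, rfl⟩)
      have hrepr : (Additive.ofMul (⟨piX G ((xi1 G k)⁻¹ * sd u * xi1 G k),
          Subgroup.mem_map_of_mem _ hz'⟩ : ↥(MQ G)) : AA G)
          = conjA (xqh G k) (δd u) := by
        apply congrArg Additive.ofMul
        apply Subtype.ext
        show piX G ((xi1 G k)⁻¹ * sd u * xi1 G k)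
            = (xqh G k)⁻¹ * piX G (sd u) * xqh G k
        simp only [map_mul, map_inv]
        rfl
      have hmemeq : (Additive.ofMul (⟨piX G ((xi1 G k)⁻¹ * sd u * xi1 G k), _⟩ : ↥(MQ G)) : AA G)
          = conjA (xqh G k) (δd u) := hrepr
      rw [hmemeq, TT_conj, TT_conj]
      have e : xqh G k * xqh G g * (xqh G k)⁻¹ = xqh G (k * g * k⁻¹) := by
        simp [map_mul]
      rw [e, keycore (k * g * k⁻¹) u]; simp
  | one =>
      intro g
      have h0 : (Additive.ofMul (⟨piX G 1,
          Subgroup.mem_map_of_mem _ (genClosure_le_L (Subgroup.one_mem _))⟩ : ↥(MQ G)) : AA G)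
          = 0 := by
        apply congrArg Additive.ofMul
        exact Subtype.ext (map_one _)
      rw [h0, map_zero, map_zero]
  | mul x y hx hy px py =>
      intro g
      have hsum : (Additive.ofMul (⟨piX G (x * y),
          Subgroup.mem_map_of_mem _ (genClosure_le_L (mul_mem hx hy))⟩ : ↥(MQ G)) : AA G)
          = (Additive.ofMul (⟨piX G x,
              Subgroup.mem_map_of_mem _ (genClosure_le_L hx)⟩ : ↥(MQ G)) : AA G)
            + (Additive.ofMul (⟨piX G y,
              Subgroup.mem_map_of_mem _ (genClosure_le_L hy)⟩ : ↥(MQ G)) : AA G) := by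
        apply congrArg Additive.ofMul
        exact Subtype.ext (map_mul _ _ _)
      rw [hsum, map_add, map_add, px g, py g, add_zero]
  | inv x hx px =>
      intro g
      have hneg : (Additive.ofMul (⟨piX G x⁻¹,
          Subgroup.mem_map_of_mem _ (genClosure_le_L (inv_mem hx))⟩ : ↥(MQ G)) : AA G)
          = - (Additive.ofMul (⟨piX G x,
              Subgroup.mem_map_of_mem _ (genClosure_le_L hx)⟩ : ↥(MQ G)) : AA G) := by
        apply congrArg Additive.ofMul
        exact Subtype.ext (map_inv _ _)
      rw [hneg, map_neg, map_neg, px g, neg_zero]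

----------------- the endomorphism ring -----------------

variable (G) in
abbrev RE := AddMonoid.End (AA G)

variable (G) in
/-- The operator `m ↦ m^{x(g)} - m`. -/
def EE (g : G) : RE G := TT (xqh G g)

lemma EE_mul_apply (g h : G) (a : AA G) : (EE G g * EE G h) a = EE G g (EE G h a) := rfl

lemma EE_sq (g : G) : EE G g * EE G g = 0 :=
  AddMonoidHom.ext fun a => keyfact g a

lemma EE_one : EE G 1 = 0 :=
  AddMonoidHom.ext fun a => by
    show TT (xqh G 1) a = 0
    rw [map_one]
    exact TT_one a

lemma EE_mulop (u v : G) : EE G (u * v) = EE G u + EE G v + EE G v * EE G u :=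
  AddMonoidHom.ext fun a => by
    show TT (xqh G (u * v)) a = _
    rw [map_mul]
    rw [TT_mul]
    rfl

section RingLemmas
variable {R : Type*} [Ring R]

lemma ring_aux (X Y : R) (hX : X * X = 0) (hY : Y * Y = 0)
    (hXY : (X + Y + Y * X) * (X + Y + Y * X) = 0) :
    X * Y * X = 0 ∧ Y * X * Y * X = 0 := by
  have expand : (X + Y + Y * X) * (X + Y + Y * X)
      = X * X + X * Y + X * Y * X + Y * X + Y * Y + Y * Y * X + Y * X * X
        + Y * X * Y + Y * X * Y * X := by noncomm_ring
  rw [expand] at hXY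
  rw [hX, hY, mul_assoc Y X X, hX, mul_zero] at hXY
  simp only [zero_mul, mul_zero, zero_add, add_zero] at hXY
  -- hXY : X*Y + X*Y*X + Y*X + Y*X*Y + Y*X*Y*X = 0
  have h3 := congrArg (· * X) hXY
  simp only [add_mul, zero_mul] at h3
  have k1 : X * Y * X * X = 0 := by rw [mul_assoc (X * Y) X X, hX, mul_zero]
  have k2 : Y * X * X = 0 := by rw [mul_assoc Y X X, hX, mul_zero]
  have k3 : Y * X * Y * X * X = 0 := by rw [mul_assoc (Y * X * Y) X X, hX, mul_zero]
  rw [k1, k2, k3] at h3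
  simp only [add_zero, zero_add] at h3
  -- h3 : X*Y*X + Y*X*Y*X = 0
  have h4 := congrArg (Y * ·) h3
  simp only [mul_add, mul_zero] at h4
  have k4 : Y * (X * Y * X) = Y * X * Y * X := by noncomm_ring
  have k5 : Y * (Y * X * Y * X) = 0 := by
    have : Y * (Y * X * Y * X) = Y * Y * (X * Y * X) := by noncomm_ring
    rw [this, hY, zero_mul]
  rw [k4, k5, add_zero] at h4
  -- h4 : Y*X*Y*X = 0
  constructor
  · have := h3
    rw [h4, add_zero] at this
    exact this
  · exact h4

lemma ring_anti (X Y : R) (hX : X * X = 0) (hY : Y * Y = 0)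
    (hXY : (X + Y + Y * X) * (X + Y + Y * X) = 0)
    (hYX : (Y + X + X * Y) * (Y + X + X * Y) = 0) :
    X * Y + Y * X = 0 := by
  obtain ⟨hxyx, hyxyx⟩ := ring_aux X Y hX hY hXY
  obtain ⟨hyxy, _⟩ := ring_aux Y X hY hX hYX
  have expand : (X + Y + Y * X) * (X + Y + Y * X)
      = X * X + X * Y + X * Y * X + Y * X + Y * Y + Y * Y * X + Y * X * X
        + Y * X * Y + Y * X * Y * X := by noncomm_ring
  rw [expand] at hXY
  rw [hX, hY, mul_assoc Y X X, hX, mul_zero, hxyx, hyxyx, hyxy] at hXY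
  simp only [zero_mul, mul_zero, zero_add, add_zero] at hXY
  exact hXY

end RingLemmas

lemma EE_anti (u v : G) : EE G u * EE G v + EE G v * EE G u = 0 := by
  apply ring_anti _ _ (EE_sq u) (EE_sq v)
  · rw [← EE_mulop]; exact EE_sq _
  · rw [← EE_mulop]; exact EE_sq _

lemma EE_inv (u : G) : EE G u⁻¹ = - EE G u := by
  have h : (0 : RE G) = EE G u + EE G u⁻¹ + EE G u⁻¹ * EE G u := by
    rw [← EE_mulop, mul_inv_cancel, EE_one]
  have h2 := congrArg (· * EE G u) h
  simp only [add_mul, zero_mul] at h2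
  rw [EE_sq, mul_assoc, EE_sq, mul_zero] at h2
  simp only [zero_add, add_zero] at h2
  -- h2 : 0 = EE u⁻¹ * EE u
  rw [← h2, add_zero] at h
  exact eq_neg_of_add_eq_zero_right h.symm
----------------- chains and pigeonhole -----------------

variable (G) in
def Ch (l : List G) : RE G := (l.map (EE G)).prod

lemma Ch_nil : Ch G ([] : List G) = 1 := rfl

lemma Ch_cons (a : G) (l : List G) : Ch G (a :: l) = EE G a * Ch G l := by
  simp [Ch]

lemma Ch_append (l₁ l₂ : List G) : Ch G (l₁ ++ l₂) = Ch G l₁ * Ch G l₂ := by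
  simp [Ch]

lemma kill (a : G) : ∀ t : List G, EE G a * (Ch G t * EE G a) = 0
  | [] => by rw [Ch_nil, one_mul]; exact EE_sq a
  | b :: t => by
      have hab : EE G a * EE G b = -(EE G b * EE G a) :=
        eq_neg_of_add_eq_zero_left (EE_anti a b)
      rw [Ch_cons, mul_assoc, ← mul_assoc, hab,
        show -(EE G b * EE G a) * (Ch G t * EE G a)
          = -(EE G b * (EE G a * (Ch G t * EE G a))) from AddMonoidHom.ext fun x => rfl,
        kill a t,
        show EE G b * (0 : RE G) = 0 from AddMonoidHom.ext fun x => by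
          show EE G b ((0 : RE G) x) = 0
          rw [show (0 : RE G) x = 0 from rfl, map_zero],
        neg_zero]

lemma chain_zero : ∀ (l : List G) (S' : Finset G), (∀ s ∈ l, s ∈ S') →
    S'.card < l.length → Ch G l = 0 := by
  classical
  intro l
  induction l with
  | nil => intro S' _ hlen; simp at hlen
  | cons a t ih =>
      intro S' hmem hlen
      by_cases ha : a ∈ t
      · obtain ⟨r₁, r₂, rfl⟩ := List.append_of_mem ha
        rw [Ch_cons, Ch_append, Ch_cons]
        have e : EE G a * (Ch G r₁ * (EE G a * Ch G r₂))
            = (EE G a * (Ch G r₁ * EE G a)) * Ch G r₂ := by noncomm_ring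
        rw [e, kill, zero_mul]
      · have haS : a ∈ S' := hmem a (by simp)
        have hmem' : ∀ s ∈ t, s ∈ S'.erase a := by
          intro s hs
          exact Finset.mem_erase.mpr ⟨fun h => ha (h ▸ hs), hmem s (List.mem_cons_of_mem _ hs)⟩
        have hlen' : (S'.erase a).card < t.length := by
          rw [Finset.card_erase_of_mem haS]
          have hc : 1 ≤ S'.card := Finset.card_pos.mpr ⟨a, haS⟩
          simp only [List.length_cons] at hlen
          omega
        rw [Ch_cons, ih (S'.erase a) hmem' hlen', mul_zero]

----------------- the additive spans -----------------

variable (G) in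
def SG (S : Finset G) (k : ℕ) : AddSubgroup (RE G) :=
  AddSubgroup.closure {r | ∃ l : List G, (∀ s ∈ l, s ∈ S) ∧ k ≤ l.length ∧ r = Ch G l}

lemma SG_mono {S : Finset G} {j k : ℕ} (h : j ≤ k) : SG G S k ≤ SG G S j :=
  AddSubgroup.closure_mono (fun r ⟨l, hl, hlen, hr⟩ => ⟨l, hl, le_trans h hlen, hr⟩)

lemma SG_mul {S : Finset G} {j k : ℕ} {x y : RE G}
    (hx : x ∈ SG G S j) (hy : y ∈ SG G S k) : x * y ∈ SG G S (j + k) := by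
  induction hx using AddSubgroup.closure_induction with
  | mem x hxx =>
      induction hy using AddSubgroup.closure_induction with
      | mem y hyy =>
          obtain ⟨l₁, hl₁, hlen₁, rfl⟩ := hxx
          obtain ⟨l₂, hl₂, hlen₂, rfl⟩ := hyy
          refine AddSubgroup.subset_closure ⟨l₁ ++ l₂, ?_, ?_, (Ch_append l₁ l₂).symm⟩
          · intro s hs
            rcases List.mem_append.mp hs with h | h
            · exact hl₁ s h
            · exact hl₂ s h
          · rw [List.length_append]; omega
      | zero =>
          rw [show x * (0 : RE G) = 0 from AddMonoidHom.ext fun a => by simp]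
          exact zero_mem _
      | add y₁ y₂ _ _ p₁ p₂ =>
          rw [show x * (y₁ + y₂) = x * y₁ + x * y₂ from AddMonoidHom.ext fun a => by
            show x ((y₁ + y₂) a) = x (y₁ a) + x (y₂ a)
            exact map_add x _ _]
          exact add_mem p₁ p₂
      | neg y₁ _ p₁ =>
          rw [show x * (-y₁) = -(x * y₁) from AddMonoidHom.ext fun a => by
            show x ((-y₁) a) = -(x (y₁ a))
            exact map_neg x _]
          exact neg_mem p₁
  | zero =>
      rw [show (0 : RE G) * y = 0 from AddMonoidHom.ext fun a => rfl]
      exact zero_mem _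
  | add x₁ x₂ _ _ p₁ p₂ =>
      rw [show (x₁ + x₂) * y = x₁ * y + x₂ * y from AddMonoidHom.ext fun a => rfl]
      exact add_mem p₁ p₂
  | neg x₁ _ p₁ =>
      rw [show (-x₁) * y = -(x₁ * y) from AddMonoidHom.ext fun a => rfl]
      exact neg_mem p₁

lemma EE_mem_SG {S : Finset G} (hS : Subgroup.closure (S : Set G) = ⊤) (g : G) :
    EE G g ∈ SG G S 1 := by
  have hg : g ∈ Subgroup.closure (S : Set G) := by rw [hS]; trivial
  induction hg using Subgroup.closure_induction with
  | mem s hs =>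
      refine AddSubgroup.subset_closure ⟨[s], by simpa using hs, by simp, ?_⟩
      simp [Ch]
  | one => rw [EE_one]; exact zero_mem _
  | mul x y hx hy px py =>
      rw [EE_mulop]
      exact add_mem (add_mem px py) (SG_mono (by omega) (SG_mul py px))
  | inv x hx px => rw [EE_inv]; exact neg_mem px

lemma SG_zero {S : Finset G} {k : ℕ} (hcard : S.card < k) {x : RE G}
    (hx : x ∈ SG G S k) : x = 0 := by
  induction hx using AddSubgroup.closure_induction with
  | mem z hz =>
      obtain ⟨l, hl, hlen, rfl⟩ := hz
      exact chain_zero l S hl (lt_of_lt_of_le hcard hlen)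
  | zero => rfl
  | add x₁ x₂ _ _ p₁ p₂ => rw [p₁, p₂, add_zero]
  | neg x₁ _ p₁ => rw [p₁, neg_zero]

----------------- the bridge to itComm -----------------

variable (G) in
def stepOp (g : G) : RE G := -(EE G g⁻¹)

variable (G) in
def stepProd : List G → RE G
  | [] => 1
  | g :: t => stepProd t * stepOp G g

lemma commutator_mem_L {ℓ : SidkiDouble G} (hℓ : ℓ ∈ sidkiL G) (w : SidkiDouble G) :
    ⁅ℓ, w⁆ ∈ sidkiL G := by
  rw [commutatorElement_def]
  have h1 : w * ℓ⁻¹ * w⁻¹ ∈ sidkiL G := by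
    have := (inferInstance : (sidkiL G).Normal).conj_mem ℓ⁻¹ (inv_mem hℓ) w
    exact this
  have h2 : ℓ * (w * ℓ⁻¹ * w⁻¹) ∈ sidkiL G := mul_mem hℓ h1
  have e : ℓ * w * ℓ⁻¹ * w⁻¹ = ℓ * (w * ℓ⁻¹ * w⁻¹) := by group
  rw [e]; exact h2

lemma stepBridge (m : ↥(MQ G)) (g : G) :
    ((Additive.toMul (stepOp G g (Additive.ofMul m)) : ↥(MQ G)) : QS G)
      = (⁅(↑m : QS G), xqh G g⁆ : QS G) := by
  have expand : stepOp G g (Additive.ofMul m)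
      = Additive.ofMul (m / conjM (xqh G g⁻¹) m) := by
    show -(TT (xqh G g⁻¹) (Additive.ofMul m)) = _
    rw [TT_apply]
    have h1 : conjA (xqh G g⁻¹) (Additive.ofMul m)
        = Additive.ofMul (conjM (xqh G g⁻¹) m) := rfl
    rw [h1, show Additive.ofMul (m / conjM (xqh G g⁻¹) m)
      = Additive.ofMul m - Additive.ofMul (conjM (xqh G g⁻¹) m) from rfl]
    abel
  rw [expand]
  have h2 : (Additive.toMul (Additive.ofMul (m / conjM (xqh G g⁻¹) m)))
      = m / conjM (xqh G g⁻¹) m := rfl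
  rw [h2]
  have h3 : ((m / conjM (xqh G g⁻¹) m : ↥(MQ G)) : QS G)
      = (↑m : QS G) * ((xqh G g⁻¹)⁻¹ * ↑m * xqh G g⁻¹)⁻¹ := by
    push_cast
    rw [show ((conjM (xqh G g⁻¹) m : ↥(MQ G)) : QS G)
      = (xqh G g⁻¹)⁻¹ * (↑m : QS G) * xqh G g⁻¹ from rfl, div_eq_mul_inv]
  rw [h3, commutatorElement_def,
    show ((xqh G g⁻¹ : QS G)) = (xqh G g)⁻¹ from map_inv _ _]
  group

lemma bridge : ∀ (gs : List G) (ℓ : SidkiDouble G) (hℓ : ℓ ∈ sidkiL G),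
    piX G (itComm ℓ (gs.map (xi1 G)))
      = ↑(Additive.toMul (stepProd G gs
          (Additive.ofMul (⟨piX G ℓ, Subgroup.mem_map_of_mem _ hℓ⟩ : ↥(MQ G))))) := by
  intro gs
  induction gs with
  | nil =>
      intro ℓ hℓ
      rfl
  | cons g t ih =>
      intro ℓ hℓ
      have step : piX G (itComm ℓ ((g :: t).map (xi1 G)))
          = piX G (itComm ⁅ℓ, xi1 G g⁆ (t.map (xi1 G))) := rfl
      rw [step, ih ⁅ℓ, xi1 G g⁆ (commutator_mem_L hℓ _)]
      have key : (⟨piX G ⁅ℓ, xi1 G g⁆,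
            Subgroup.mem_map_of_mem _ (commutator_mem_L hℓ _)⟩ : ↥(MQ G))
          = Additive.toMul (stepOp G g (Additive.ofMul
              (⟨piX G ℓ, Subgroup.mem_map_of_mem _ hℓ⟩ : ↥(MQ G)))) := by
        apply Subtype.ext
        rw [stepBridge]
        show piX G ⁅ℓ, xi1 G g⁆ = ⁅(piX G ℓ : QS G), xqh G g⁆
        exact map_commutatorElement _ _ _
      rw [key]
      rfl

lemma stepProd_mem {S : Finset G} (hS : Subgroup.closure (S : Set G) = ⊤) :
    ∀ gs : List G, stepProd G gs ∈ SG G S gs.length := by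
  intro gs
  induction gs with
  | nil => exact AddSubgroup.subset_closure ⟨[], by simp, by simp, rfl⟩
  | cons g t ih =>
      show stepProd G t * stepOp G g ∈ SG G S (t.length + 1)
      exact SG_mul ih (neg_mem (EE_mem_SG hS g⁻¹))

end SidkiProof

/-- For every finitely generated group `G`, the conjugation action of `G` on
`L/[L,L]` is nilpotent. -/
theorem sidki_action_on_L_ab_nilpotent (G : Type*) [Group G] (hfg : Group.FG G) :
    ∃ d : ℕ, ∀ ℓ ∈ sidkiL G, ∀ gs : List G, gs.length = d →
      itComm ℓ (gs.map (xi1 G)) ∈ (⁅sidkiL G, sidkiL G⁆ : Subgroup (SidkiDouble G)) := by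
  classical
  obtain ⟨n, S, hcard, hS⟩ := Group.fg_iff'.mp hfg
  refine ⟨S.card + 1, ?_⟩
  intro ℓ hℓ gs hlen
  have hb := SidkiProof.bridge gs ℓ hℓ
  have hz : SidkiProof.stepProd G gs = 0 :=
    SidkiProof.SG_zero (S := S) (by omega) (hlen ▸ SidkiProof.stepProd_mem hS gs)
  rw [hz] at hb
  have h0 : SidkiProof.piX G (itComm ℓ (gs.map (xi1 G))) = 1 := by
    rw [hb]
    simp
  rw [← QuotientGroup.eq_one_iff (itComm ℓ (gs.map (xi1 G)))]
  exact h0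
end

section
/- If G is a perfect group (G = [G,G]), then the homomorphism ρ : 𝔛(G) → G × G × G is surjective and its kernel W is contained in the centre of 𝔛(G). -/
open Monoid
open scoped commutatorElement

/-! ### Auxiliary development -/

section SidkiAux

variable {G X : Type*} [Group G] [Group X]

private lemma sidki_expand1 (u v z : X) : ⁅u * v, z⁆ = u * ⁅v, z⁆ * u⁻¹ * ⁅u, z⁆ := by
  simp only [commutatorElement_def, mul_inv_rev]
  simp only [mul_assoc, mul_inv_cancel_left, inv_mul_cancel_left]

private lemma sidki_expand2 (z u v : X) : ⁅z, u * v⁆ = ⁅z, u⁆ * (u * ⁅z, v⁆ * u⁻¹) := by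
  simp only [commutatorElement_def, mul_inv_rev]
  simp only [mul_assoc, mul_inv_cancel_left, inv_mul_cancel_left]

private lemma sidki_L1 (a b : G →* X) (hrel : ∀ g : G, ⁅a g, b g⁆ = 1) (s t : G) :
    ⁅a t, b s⁆ = ⁅a s, b t⁆⁻¹ := by
  obtain ⟨y, hy⟩ : ∃ y, t * y = s := ⟨t⁻¹ * s, by group⟩
  have h := hrel (t * y)
  rw [map_mul, map_mul, sidki_expand1, sidki_expand2 (a y) (b t) (b y),
    sidki_expand2 (a t) (b t) (b y), hrel y, hrel t] at h
  simp only [mul_one, one_mul, mul_inv_cancel] at h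
  have e1 : ⁅a s, b t⁆ = a t * ⁅a y, b t⁆ * (a t)⁻¹ := by
    rw [← hy, map_mul, sidki_expand1, hrel t, mul_one]
  have e2 : ⁅a t, b s⁆ = b t * ⁅a t, b y⁆ * (b t)⁻¹ := by
    rw [← hy, map_mul, sidki_expand2, hrel t, one_mul]
  rw [e1, e2]
  exact eq_inv_of_mul_eq_one_right h

private lemma sidki_key (a b : G →* X) (hrel : ∀ g : G, ⁅a g, b g⁆ = 1) (g h k : G) :
    a k * ⁅a g, b h⁆ * (a k)⁻¹ = b k * ⁅a g, b h⁆ * (b k)⁻¹ := by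
  have e1 : a k * ⁅a g, b h⁆ * (a k)⁻¹ = ⁅a (k * g), b h⁆ * ⁅a k, b h⁆⁻¹ := by
    rw [map_mul, sidki_expand1]; group
  have e2 : ⁅a (k * g), b h⁆ = ⁅a h, b (k * g)⁆⁻¹ := sidki_L1 a b hrel h (k * g)
  have e3 : ⁅a h, b (k * g)⁆ = ⁅a h, b k⁆ * (b k * ⁅a h, b g⁆ * (b k)⁻¹) := by
    rw [map_mul, sidki_expand2]
  have e4 : ⁅a k, b h⁆⁻¹ = ⁅a h, b k⁆ := (sidki_L1 a b hrel k h).symm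
  have e5 : ⁅a h, b g⁆⁻¹ = ⁅a g, b h⁆ := by rw [sidki_L1 a b hrel g h, inv_inv]
  rw [e1, e2, e3, e4]
  calc (⁅a h, b k⁆ * (b k * ⁅a h, b g⁆ * (b k)⁻¹))⁻¹ * ⁅a h, b k⁆
      = b k * ⁅a h, b g⁆⁻¹ * (b k)⁻¹ := by group
    _ = b k * ⁅a g, b h⁆ * (b k)⁻¹ := by rw [e5]

end SidkiAux

section SidkiDoubleAux

variable {G : Type*} [Group G]

private lemma sidki_rel (g : G) : ⁅xi1 G g, xi2 G g⁆ = 1 := by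
  have h : ⁅xi1 G g, xi2 G g⁆
      = QuotientGroup.mk' (sidkiRels G)
          ⁅(Coprod.inl g : Coprod G G), (Coprod.inr g : Coprod G G)⁆ := by
    rw [map_commutatorElement]; rfl
  rw [h, QuotientGroup.mk'_apply]
  exact (QuotientGroup.eq_one_iff _).mpr (Subgroup.subset_normalClosure ⟨g, rfl⟩)

private lemma sidki_rho_xi1 (g : G) : sidkiRho G (xi1 G g) = (g, g, 1) := by
  show sidkiRhoFree G (Coprod.inl g) = _
  simp [sidkiRhoFree]

private lemma sidki_rho_xi2 (g : G) : sidkiRho G (xi2 G g) = (1, g, g) := by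
  show sidkiRhoFree G (Coprod.inr g) = _
  simp [sidkiRhoFree]

/-- Induction over `𝔛(G)` by left multiplication by generators. -/
private lemma sidki_gen (C : SidkiDouble G → Prop) (h1 : C 1)
    (hA : ∀ (m : G) (x : SidkiDouble G), C x → C (xi1 G m * x))
    (hB : ∀ (m : G) (x : SidkiDouble G), C x → C (xi2 G m * x)) :
    ∀ x : SidkiDouble G, C x := by
  intro x
  obtain ⟨w, rfl⟩ := QuotientGroup.mk'_surjective (sidkiRels G) x
  induction w using Coprod.induction_on' with
  | one => exact h1
  | inl_mul m y ih => rw [map_mul]; exact hA m _ ih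
  | inr_mul m y ih => rw [map_mul]; exact hB m _ ih

/-- The subgroup of `𝔛(G)` generated by the mixed commutators `⁅g, h̄⁆`. -/
private def sidkiT (G : Type*) [Group G] : Subgroup (SidkiDouble G) :=
  Subgroup.closure {x | ∃ g h : G, ⁅xi1 G g, xi2 G h⁆ = x}

private lemma mem_sidkiT (g h : G) : ⁅xi1 G g, xi2 G h⁆ ∈ sidkiT G :=
  Subgroup.subset_closure ⟨g, h, rfl⟩

private lemma sidkiT_conj_xi1 (k : G) {t : SidkiDouble G} (ht : t ∈ sidkiT G) :
    xi1 G k * t * (xi1 G k)⁻¹ ∈ sidkiT G := by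
  induction ht using Subgroup.closure_induction with
  | mem x hx =>
    obtain ⟨g, h, rfl⟩ := hx
    have e : xi1 G k * ⁅xi1 G g, xi2 G h⁆ * (xi1 G k)⁻¹
        = ⁅xi1 G (k * g), xi2 G h⁆ * ⁅xi1 G k, xi2 G h⁆⁻¹ := by
      rw [map_mul, sidki_expand1]; group
    rw [e]
    exact mul_mem (mem_sidkiT _ _) (inv_mem (mem_sidkiT _ _))
  | one => simpa using one_mem (sidkiT G)
  | mul x y hx hy ihx ihy =>
    have e : xi1 G k * (x * y) * (xi1 G k)⁻¹
        = (xi1 G k * x * (xi1 G k)⁻¹) * (xi1 G k * y * (xi1 G k)⁻¹) := by group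
    rw [e]; exact mul_mem ihx ihy
  | inv x hx ih =>
    have e : xi1 G k * x⁻¹ * (xi1 G k)⁻¹ = (xi1 G k * x * (xi1 G k)⁻¹)⁻¹ := by group
    rw [e]; exact inv_mem ih

private lemma sidkiT_conj_xi2 (k : G) {t : SidkiDouble G} (ht : t ∈ sidkiT G) :
    xi2 G k * t * (xi2 G k)⁻¹ ∈ sidkiT G := by
  induction ht using Subgroup.closure_induction with
  | mem x hx =>
    obtain ⟨g, h, rfl⟩ := hx
    have e : xi2 G k * ⁅xi1 G g, xi2 G h⁆ * (xi2 G k)⁻¹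
        = ⁅xi1 G g, xi2 G k⁆⁻¹ * ⁅xi1 G g, xi2 G (k * h)⁆ := by
      rw [map_mul, sidki_expand2]; group
    rw [e]
    exact mul_mem (inv_mem (mem_sidkiT _ _)) (mem_sidkiT _ _)
  | one => simpa using one_mem (sidkiT G)
  | mul x y hx hy ihx ihy =>
    have e : xi2 G k * (x * y) * (xi2 G k)⁻¹
        = (xi2 G k * x * (xi2 G k)⁻¹) * (xi2 G k * y * (xi2 G k)⁻¹) := by group
    rw [e]; exact mul_mem ihx ihy
  | inv x hx ih =>
    have e : xi2 G k * x⁻¹ * (xi2 G k)⁻¹ = (xi2 G k * x * (xi2 G k)⁻¹)⁻¹ := by group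
    rw [e]; exact inv_mem ih

private lemma sidkiT_normal : (sidkiT G).Normal := by
  constructor
  intro t ht x
  induction x using sidki_gen with
  | h1 => simpa using ht
  | hA m y ih =>
    have e : xi1 G m * y * t * (xi1 G m * y)⁻¹
        = xi1 G m * (y * t * y⁻¹) * (xi1 G m)⁻¹ := by group
    rw [e]; exact sidkiT_conj_xi1 m ih
  | hB m y ih =>
    have e : xi2 G m * y * t * (xi2 G m * y)⁻¹
        = xi2 G m * (y * t * y⁻¹) * (xi2 G m)⁻¹ := by group
    rw [e]; exact sidkiT_conj_xi2 m ih

/-- Every element of `𝔛(G)` has the form `t * g * h̄` with `t ∈ T`. -/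
private lemma sidki_decomp (x : SidkiDouble G) :
    ∃ t ∈ sidkiT G, ∃ p q : G, x = t * xi1 G p * xi2 G q := by
  have hnormal := sidkiT_normal (G := G)
  induction x using sidki_gen with
  | h1 => exact ⟨1, one_mem _, 1, 1, by simp⟩
  | hA m x ih =>
    obtain ⟨t, ht, p, q, hx⟩ := ih
    refine ⟨xi1 G m * t * (xi1 G m)⁻¹, hnormal.conj_mem t ht _, m * p, q, ?_⟩
    rw [hx, map_mul]
    group
  | hB m x ih =>
    obtain ⟨t, ht, p, q, hx⟩ := ih
    have hτ : xi1 G p * ⁅(xi1 G p)⁻¹, xi2 G m⁆ * (xi1 G p)⁻¹ ∈ sidkiT G := by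
      refine hnormal.conj_mem _ ?_ _
      rw [← map_inv]
      exact mem_sidkiT p⁻¹ m
    refine ⟨(xi2 G m * t * (xi2 G m)⁻¹) * (xi1 G p * ⁅(xi1 G p)⁻¹, xi2 G m⁆ * (xi1 G p)⁻¹),
      mul_mem (hnormal.conj_mem t ht _) hτ, p, m * q, ?_⟩
    rw [hx, map_mul]
    simp only [commutatorElement_def]
    group

private def sidkiP1 (G : Type*) [Group G] : SidkiDouble G →* G :=
  (MonoidHom.fst G (G × G)).comp (sidkiRho G)

private def sidkiP3 (G : Type*) [Group G] : SidkiDouble G →* G :=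
  ((MonoidHom.snd G G).comp (MonoidHom.snd G (G × G))).comp (sidkiRho G)

private def sidkiPrm (G : Type*) [Group G] : SidkiDouble G →* G :=
  ((MonoidHom.fst G G).comp (MonoidHom.snd G (G × G))).comp (sidkiRho G)

private lemma sidkiP1_xi1 (g : G) : sidkiP1 G (xi1 G g) = g := by
  simp [sidkiP1, sidki_rho_xi1]

private lemma sidkiP1_xi2 (g : G) : sidkiP1 G (xi2 G g) = 1 := by
  simp [sidkiP1, sidki_rho_xi2]

private lemma sidkiP3_xi1 (g : G) : sidkiP3 G (xi1 G g) = 1 := by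
  simp [sidkiP3, sidki_rho_xi1]

private lemma sidkiP3_xi2 (g : G) : sidkiP3 G (xi2 G g) = g := by
  simp [sidkiP3, sidki_rho_xi2]

private lemma sidkiPrm_xi1 (g : G) : sidkiPrm G (xi1 G g) = g := by
  simp [sidkiPrm, sidki_rho_xi1]

private lemma sidkiPrm_xi2 (g : G) : sidkiPrm G (xi2 G g) = g := by
  simp [sidkiPrm, sidki_rho_xi2]

/-- The first and third coordinates of `ρ` vanish on `T`. -/
private lemma sidkiT_coords : sidkiT G ≤ (sidkiP1 G).ker ⊓ (sidkiP3 G).ker := by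
  rw [sidkiT, Subgroup.closure_le]
  rintro x ⟨g, h, rfl⟩
  have h1 : sidkiP1 G ⁅xi1 G g, xi2 G h⁆ = 1 := by
    rw [map_commutatorElement, sidkiP1_xi1, sidkiP1_xi2]
    simp [commutatorElement_def]
  have h3 : sidkiP3 G ⁅xi1 G g, xi2 G h⁆ = 1 := by
    rw [map_commutatorElement, sidkiP3_xi1, sidkiP3_xi2]
    simp [commutatorElement_def]
  exact ⟨h1, h3⟩

/-- `W ≤ T`. -/
private lemma sidkiW_le_T {w : SidkiDouble G} (hw : sidkiRho G w = 1) : w ∈ sidkiT G := by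
  obtain ⟨t, ht, p, q, rfl⟩ := sidki_decomp w
  have h13 := sidkiT_coords ht
  rw [Subgroup.mem_inf, MonoidHom.mem_ker, MonoidHom.mem_ker] at h13
  obtain ⟨h1, h3⟩ := h13
  have hfst : sidkiP1 G (t * xi1 G p * xi2 G q) = 1 := by
    have e : sidkiP1 G (t * xi1 G p * xi2 G q)
        = (MonoidHom.fst G (G × G)) (sidkiRho G (t * xi1 G p * xi2 G q)) := rfl
    rw [e, hw, map_one]
  have hthd : sidkiP3 G (t * xi1 G p * xi2 G q) = 1 := by
    have e : sidkiP3 G (t * xi1 G p * xi2 G q)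
        = ((MonoidHom.snd G G).comp (MonoidHom.snd G (G × G)))
            (sidkiRho G (t * xi1 G p * xi2 G q)) := rfl
    rw [e, hw, map_one]
  have hp : p = 1 := by simpa [map_mul, h1, sidkiP1_xi1, sidkiP1_xi2] using hfst
  have hq : q = 1 := by simpa [map_mul, h3, sidkiP3_xi1, sidkiP3_xi2] using hthd
  subst hp; subst hq
  simpa using ht

/-- Conjugation by `k` and by `k̄` agree on `T` (the key commutation). -/
private lemma sidkiT_key (k : G) {t : SidkiDouble G} (ht : t ∈ sidkiT G) :
    xi1 G k * t * (xi1 G k)⁻¹ = xi2 G k * t * (xi2 G k)⁻¹ := by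
  induction ht using Subgroup.closure_induction with
  | mem x hx =>
    obtain ⟨g, h, rfl⟩ := hx
    exact sidki_key (xi1 G) (xi2 G) sidki_rel g h k
  | one => simp
  | mul x y hx hy ihx ihy =>
    calc xi1 G k * (x * y) * (xi1 G k)⁻¹
        = (xi1 G k * x * (xi1 G k)⁻¹) * (xi1 G k * y * (xi1 G k)⁻¹) := by group
      _ = (xi2 G k * x * (xi2 G k)⁻¹) * (xi2 G k * y * (xi2 G k)⁻¹) := by rw [ihx, ihy]
      _ = xi2 G k * (x * y) * (xi2 G k)⁻¹ := by group
  | inv x hx ih =>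
    calc xi1 G k * x⁻¹ * (xi1 G k)⁻¹ = (xi1 G k * x * (xi1 G k)⁻¹)⁻¹ := by group
      _ = (xi2 G k * x * (xi2 G k)⁻¹)⁻¹ := by rw [ih]
      _ = xi2 G k * x⁻¹ * (xi2 G k)⁻¹ := by group

/-- Inverse-conjugation version of the key commutation. -/
private lemma sidkiT_key' (k : G) {t : SidkiDouble G} (ht : t ∈ sidkiT G) :
    (xi1 G k)⁻¹ * t * xi1 G k = (xi2 G k)⁻¹ * t * xi2 G k := by
  have h := sidkiT_key k⁻¹ ht
  rwa [map_inv, map_inv, inv_inv, inv_inv] at h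

/-- Conjugation of an element of `T` by any `x` only depends on `π₂ x`. -/
private lemma sidki_conj_prm (x : SidkiDouble G) {t : SidkiDouble G} (ht : t ∈ sidkiT G) :
    x * t * x⁻¹ = xi1 G (sidkiPrm G x) * t * (xi1 G (sidkiPrm G x))⁻¹ := by
  have hnormal := sidkiT_normal (G := G)
  induction x using sidki_gen with
  | h1 => simp
  | hA m y ih =>
    rw [map_mul, sidkiPrm_xi1, map_mul]
    calc xi1 G m * y * t * (xi1 G m * y)⁻¹
        = xi1 G m * (y * t * y⁻¹) * (xi1 G m)⁻¹ := by group
      _ = xi1 G m * (xi1 G (sidkiPrm G y) * t * (xi1 G (sidkiPrm G y))⁻¹) * (xi1 G m)⁻¹ := by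
          rw [ih]
      _ = xi1 G m * xi1 G (sidkiPrm G y) * t * (xi1 G m * xi1 G (sidkiPrm G y))⁻¹ := by group
  | hB m y ih =>
    have hmem : xi1 G (sidkiPrm G y) * t * (xi1 G (sidkiPrm G y))⁻¹ ∈ sidkiT G :=
      hnormal.conj_mem t ht _
    rw [map_mul, sidkiPrm_xi2, map_mul]
    calc xi2 G m * y * t * (xi2 G m * y)⁻¹
        = xi2 G m * (y * t * y⁻¹) * (xi2 G m)⁻¹ := by group
      _ = xi2 G m * (xi1 G (sidkiPrm G y) * t * (xi1 G (sidkiPrm G y))⁻¹) * (xi2 G m)⁻¹ := by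
          rw [ih]
      _ = xi1 G m * (xi1 G (sidkiPrm G y) * t * (xi1 G (sidkiPrm G y))⁻¹) * (xi1 G m)⁻¹ := by
          rw [sidkiT_key m hmem]
      _ = xi1 G m * xi1 G (sidkiPrm G y) * t * (xi1 G m * xi1 G (sidkiPrm G y))⁻¹ := by group

end SidkiDoubleAux

/-- If `G` is perfect, then `ρ : 𝔛(G) → G × G × G` is surjective and
`W = ker ρ` is central in `𝔛(G)`. -/
theorem sidkiRho_surjective_and_ker_central (G : Type*) [Group G]
    (hperf : commutator G = ⊤) :
    Function.Surjective (sidkiRho G) ∧ sidkiW G ≤ Subgroup.center (SidkiDouble G) := by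
  -- middle coordinate elements are in the range of ρ
  have hmid : ∀ m : G, ((1 : G), m, (1 : G)) ∈ (sidkiRho G).range := by
    intro m
    have hm : m ∈ Subgroup.closure (commutatorSet G) := by
      rw [← commutator_eq_closure, hperf]; trivial
    induction hm using Subgroup.closure_induction with
    | mem x hx =>
      obtain ⟨g, h, rfl⟩ := hx
      refine ⟨⁅xi1 G g, xi2 G h⁆, ?_⟩
      rw [map_commutatorElement, sidki_rho_xi1, sidki_rho_xi2]
      simp [commutatorElement_def, Prod.ext_iff]
    | one => exact one_mem (sidkiRho G).range
    | mul x y hx hy ihx ihy => simpa using mul_mem ihx ihy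
    | inv x hx ih => simpa using inv_mem ih
  have hsurj : Function.Surjective (sidkiRho G) := by
    rw [← MonoidHom.range_eq_top, eq_top_iff]
    rintro ⟨x, y, z⟩ -
    have h1 : ((x : G), x, (1 : G)) ∈ (sidkiRho G).range := ⟨xi1 G x, sidki_rho_xi1 x⟩
    have h2 : ((1 : G), x⁻¹ * y * z⁻¹, (1 : G)) ∈ (sidkiRho G).range := hmid _
    have h3 : ((1 : G), z, z) ∈ (sidkiRho G).range := ⟨xi2 G z, sidki_rho_xi2 z⟩
    have h4 := mul_mem (mul_mem h1 h2) h3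
    have e : ((x, x, (1:G)) : G × G × G) * ((1:G), x⁻¹ * y * z⁻¹, (1:G)) * ((1:G), z, z)
        = (x, y, z) := by
      simp only [Prod.mk_mul_mk, Prod.mk.injEq]
      refine ⟨by group, by group, by group⟩
    rwa [e] at h4
  refine ⟨hsurj, ?_⟩
  intro w hw
  have hw1 : sidkiRho G w = 1 := hw
  have hwT : w ∈ sidkiT G := sidkiW_le_T hw1
  have hprm : sidkiPrm G w = 1 := by
    have e : sidkiPrm G w
        = ((MonoidHom.fst G G).comp (MonoidHom.snd G (G × G))) (sidkiRho G w) := rfl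
    rw [e, hw1, map_one]
  -- `w` centralizes `T`
  have hcent : ∀ t ∈ sidkiT G, w * t * w⁻¹ = t := by
    intro t ht
    have h := sidki_conj_prm w ht
    rwa [hprm, map_one, one_mul, inv_one, mul_one] at h
  have hcommT : ∀ t ∈ sidkiT G, w * t = t * w := by
    intro t ht
    have h := hcent t ht
    calc w * t = w * t * w⁻¹ * w := by group
      _ = t * w := by rw [h]
  -- `w` commutes with commutators of first-copy generators
  have hrepl : ∀ g h : G, ⁅xi1 G g, xi1 G h⁆ * w * ⁅xi1 G g, xi1 G h⁆⁻¹ = w := by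
    intro g h
    have s1 : (xi1 G h)⁻¹ * w * xi1 G h = (xi2 G h)⁻¹ * w * xi2 G h := sidkiT_key' h hwT
    have m2 : (xi2 G h)⁻¹ * w * xi2 G h ∈ sidkiT G := by
      rw [← s1]
      exact (sidkiT_normal (G := G)).conj_mem' w hwT (xi1 G h)
    have m3 : (xi1 G g)⁻¹ * ((xi2 G h)⁻¹ * w * xi2 G h) * xi1 G g ∈ sidkiT G :=
      (sidkiT_normal (G := G)).conj_mem' _ m2 (xi1 G g)
    have hu : w * ⁅xi1 G g, xi2 G h⁆ = ⁅xi1 G g, xi2 G h⁆ * w := hcommT _ (mem_sidkiT g h)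
    calc ⁅xi1 G g, xi1 G h⁆ * w * ⁅xi1 G g, xi1 G h⁆⁻¹
        = xi1 G g * (xi1 G h * ((xi1 G g)⁻¹ * ((xi1 G h)⁻¹ * w * xi1 G h) * xi1 G g)
            * (xi1 G h)⁻¹) * (xi1 G g)⁻¹ := by
          simp only [commutatorElement_def, mul_inv_rev]; group
      _ = xi1 G g * (xi1 G h * ((xi1 G g)⁻¹ * ((xi2 G h)⁻¹ * w * xi2 G h) * xi1 G g)
            * (xi1 G h)⁻¹) * (xi1 G g)⁻¹ := by rw [s1]
      _ = xi1 G g * (xi2 G h * ((xi1 G g)⁻¹ * ((xi2 G h)⁻¹ * w * xi2 G h) * xi1 G g)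
            * (xi2 G h)⁻¹) * (xi1 G g)⁻¹ := by rw [sidkiT_key h m3]
      _ = ⁅xi1 G g, xi2 G h⁆ * w * ⁅xi1 G g, xi2 G h⁆⁻¹ := by
          simp only [commutatorElement_def, mul_inv_rev]; group
      _ = w := by rw [← hu]; group
  -- `w` commutes with every `xi1 G k`
  have hA : ∀ k : G, w * xi1 G k = xi1 G k * w := by
    intro k
    have hk : k ∈ Subgroup.closure (commutatorSet G) := by
      rw [← commutator_eq_closure, hperf]; trivial
    induction hk using Subgroup.closure_induction with
    | mem x hx =>
      obtain ⟨g, h, rfl⟩ := hx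
      rw [map_commutatorElement]
      have h2 := hrepl g h
      calc w * ⁅xi1 G g, xi1 G h⁆
          = (⁅xi1 G g, xi1 G h⁆ * w * ⁅xi1 G g, xi1 G h⁆⁻¹) * ⁅xi1 G g, xi1 G h⁆ := by
            rw [h2]
        _ = ⁅xi1 G g, xi1 G h⁆ * w := by group
    | one => rw [map_one, mul_one, one_mul]
    | mul x y hx hy ihx ihy => rw [map_mul, ← mul_assoc, ihx, mul_assoc, ihy, ← mul_assoc]
    | inv x hx ih =>
      rw [map_inv]
      calc w * (xi1 G x)⁻¹ = (xi1 G x)⁻¹ * (xi1 G x * w) * (xi1 G x)⁻¹ := by group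
        _ = (xi1 G x)⁻¹ * (w * xi1 G x) * (xi1 G x)⁻¹ := by rw [← ih]
        _ = (xi1 G x)⁻¹ * w := by group
  -- `w` commutes with every `xi2 G k`
  have hB : ∀ k : G, w * xi2 G k = xi2 G k * w := by
    intro k
    have h2 : (xi1 G k)⁻¹ * w * xi1 G k = w := by
      calc (xi1 G k)⁻¹ * w * xi1 G k = (xi1 G k)⁻¹ * (w * xi1 G k) := by group
        _ = (xi1 G k)⁻¹ * (xi1 G k * w) := by rw [hA k]
        _ = w := by group
    have h3 : (xi2 G k)⁻¹ * w * xi2 G k = w := by rw [← sidkiT_key' k hwT, h2]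
    calc w * xi2 G k = xi2 G k * ((xi2 G k)⁻¹ * w * xi2 G k) := by group
      _ = xi2 G k * w := by rw [h3]
  rw [Subgroup.mem_center_iff]
  intro x
  induction x using sidki_gen with
  | h1 => rw [one_mul, mul_one]
  | hA m y ih => rw [mul_assoc, ih, ← mul_assoc, ← hA m, mul_assoc]
  | hB m y ih => rw [mul_assoc, ih, ← mul_assoc, ← hB m, mul_assoc]
end

section
/- Let G be a finitely presented group that admits a surjective homomorphism onto a non-abelian free group. Then for every finite presentation of 𝔛(G) with Dehn function δ, one has n³ ≼ δ(n); that is, the Dehn function of 𝔛(G) is bounded below by a cubic polynomial. -/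
open Monoid
open scoped commutatorElement

/-- A finite presentation of a group `Γ`: a finite generating type `X`, a surjection
`π : FreeGroup X → Γ`, and a finite set of relators whose normal closure is `ker π`. -/
structure FinitePresentation (Γ : Type*) [Group Γ] where
  X : Type
  fintypeX : Fintype X
  π : FreeGroup X →* Γ
  surj : Function.Surjective π
  rels : Finset (FreeGroup X)
  ker_eq : π.ker = Subgroup.normalClosure (rels : Set (FreeGroup X))

/-- The length of the reduced word representing an element of a free group. -/
noncomputable def wordLength {X : Type*} (w : FreeGroup X) : ℕ :=
  sInf {n | ∃ l : List (X × Bool), FreeGroup.mk l = w ∧ l.length = n}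

/-- `w` can be written as a product of `N` conjugates of relators in `R ∪ R⁻¹`. -/
def ExprWith {X : Type*} (R : Finset (FreeGroup X)) (w : FreeGroup X) (N : ℕ) : Prop :=
  ∃ θ r : Fin N → FreeGroup X,
    (∀ i, r i ∈ R ∨ (r i)⁻¹ ∈ R) ∧
    w = (List.ofFn fun i => (θ i)⁻¹ * r i * θ i).prod

/-- The area of a word `w` lying in the kernel of the presentation map. -/
noncomputable def area {Γ : Type*} [Group Γ] (P : FinitePresentation Γ)
    (w : FreeGroup P.X) : ℕ :=
  sInf {N | ExprWith P.rels w N}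

/-- The Dehn function of a finite presentation. -/
noncomputable def dehn {Γ : Type*} [Group Γ] (P : FinitePresentation Γ) : ℕ → ℕ :=
  fun n => sSup {A | ∃ w ∈ P.π.ker, wordLength w ≤ n ∧ area P w = A}

/-- `f ≼ g` : there is `C ≥ 1` with `f n ≤ C * g (C*n + C) + C*n + C` for all `n`. -/
def Preceq (f g : ℕ → ℕ) : Prop :=
  ∃ C : ℕ, 1 ≤ C ∧ ∀ n, f n ≤ C * g (C * n + C) + C * n + C

@[ext] structure Uni where
  a12 : ℤ
  a13 : ℤ
  a14 : ℤ
  a23 : ℤ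
  a24 : ℤ
  a34 : ℤ
namespace Uni
instance : One Uni := ⟨⟨0,0,0,0,0,0⟩⟩
instance : Mul Uni := ⟨fun A B =>
  ⟨A.a12 + B.a12,
   A.a13 + B.a13 + A.a12 * B.a23,
   A.a14 + B.a14 + A.a12 * B.a24 + A.a13 * B.a34,
   A.a23 + B.a23,
   A.a24 + B.a24 + A.a23 * B.a34,
   A.a34 + B.a34⟩⟩
instance : Inv Uni := ⟨fun A =>
  ⟨-A.a12,
   -A.a13 + A.a12 * A.a23,
   -A.a14 + A.a12 * A.a24 + A.a13 * A.a34 - A.a12 * A.a23 * A.a34,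
   -A.a23,
   -A.a24 + A.a23 * A.a34,
   -A.a34⟩⟩
@[simp] lemma mul_a12 (A B : Uni) : (A * B).a12 = A.a12 + B.a12 := rfl
@[simp] lemma mul_a13 (A B : Uni) : (A * B).a13 = A.a13 + B.a13 + A.a12 * B.a23 := rfl
@[simp] lemma mul_a14 (A B : Uni) :
    (A * B).a14 = A.a14 + B.a14 + A.a12 * B.a24 + A.a13 * B.a34 := rfl
@[simp] lemma mul_a23 (A B : Uni) : (A * B).a23 = A.a23 + B.a23 := rfl
@[simp] lemma mul_a24 (A B : Uni) : (A * B).a24 = A.a24 + B.a24 + A.a23 * B.a34 := rfl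
@[simp] lemma mul_a34 (A B : Uni) : (A * B).a34 = A.a34 + B.a34 := rfl
@[simp] lemma one_a12 : (1 : Uni).a12 = 0 := rfl
@[simp] lemma one_a13 : (1 : Uni).a13 = 0 := rfl
@[simp] lemma one_a14 : (1 : Uni).a14 = 0 := rfl
@[simp] lemma one_a23 : (1 : Uni).a23 = 0 := rfl
@[simp] lemma one_a24 : (1 : Uni).a24 = 0 := rfl
@[simp] lemma one_a34 : (1 : Uni).a34 = 0 := rfl
@[simp] lemma inv_a12 (A : Uni) : (A⁻¹).a12 = -A.a12 := rfl
@[simp] lemma inv_a13 (A : Uni) : (A⁻¹).a13 = -A.a13 + A.a12 * A.a23 := rfl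
@[simp] lemma inv_a14 (A : Uni) :
    (A⁻¹).a14 = -A.a14 + A.a12 * A.a24 + A.a13 * A.a34 - A.a12 * A.a23 * A.a34 := rfl
@[simp] lemma inv_a23 (A : Uni) : (A⁻¹).a23 = -A.a23 := rfl
@[simp] lemma inv_a24 (A : Uni) : (A⁻¹).a24 = -A.a24 + A.a23 * A.a34 := rfl
@[simp] lemma inv_a34 (A : Uni) : (A⁻¹).a34 = -A.a34 := rfl
instance : Group Uni where
  mul_assoc A B C := by ext <;> simp <;> ring
  one_mul A := by ext <;> simp
  mul_one A := by ext <;> simp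
  inv_mul_cancel A := by ext <;> simp <;> ring
def zeta (t : ℤ) : Uni := ⟨0, 0, t, 0, 0, 0⟩
@[simp] lemma zeta_mul_comm (t : ℤ) (M : Uni) : zeta t * M = M * zeta t := by
  ext <;> simp [zeta] <;> ring
lemma zeta_mul (s t : ℤ) : zeta s * zeta t = zeta (s + t) := by
  ext <;> simp [zeta]
@[simp] lemma zeta_zero : zeta 0 = 1 := rfl
lemma zeta_inv (t : ℤ) : (zeta t)⁻¹ = zeta (-t) := by
  ext <;> simp [zeta]
lemma zeta_zpow (k : ℤ) : (zeta 1) ^ k = zeta k := by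
  induction k using Int.induction_on with
  | zero => simp
  | succ n ih => rw [zpow_add_one, ih, zeta_mul]
  | pred n ih => rw [zpow_sub_one, ih, zeta_inv, zeta_mul]; ring_nf

/-- key commutator computation: if the superdiagonal of B is twice that of A,
then [A,B] is central, with explicit corner entry. -/
lemma commutator_eq_zeta (A B : Uni) (h12 : B.a12 = 2 * A.a12)
    (h23 : B.a23 = 2 * A.a23) (h34 : B.a34 = 2 * A.a34) :
    ⁅A, B⁆ = zeta (A.a12 * B.a24 + A.a13 * B.a34 - B.a12 * A.a24 - B.a13 * A.a34) := by
  rw [commutatorElement_def]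
  ext <;> simp [zeta, h12, h23, h34] <;> ring

/-- the generators -/
def xhat : Uni := ⟨1, 0, 0, 0, 0, 0⟩
def yhat : Uni := ⟨0, 0, 0, 1, 0, 1⟩

lemma xhat_pow (n : ℕ) : xhat ^ n = ⟨(n : ℤ), 0, 0, 0, 0, 0⟩ := by
  induction n with
  | zero => rfl
  | succ n ih => rw [pow_succ, ih]; ext <;> simp [xhat] <;> push_cast <;> ring

lemma yhat_pow (n : ℕ) : yhat ^ n = ⟨0, 0, 0, (n : ℤ), (n.choose 2 : ℤ), (n : ℤ)⟩ := by
  induction n with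
  | zero => rfl
  | succ n ih =>
    rw [pow_succ, ih]
    have : ((n+1).choose 2 : ℤ) = (n.choose 2 : ℤ) + n := by
      rw [Nat.choose_succ_succ]
      push_cast [Nat.choose_one_right]
      ring
    ext <;> simp [yhat, this] <;> push_cast <;> ring

/-- conjugates A_n = x^n y^n x^{-n} -/
lemma conj_formula (n : ℕ) :
    xhat ^ n * yhat ^ n * (xhat ^ n)⁻¹ =
      ⟨0, (n:ℤ)^2, (n:ℤ) * (n.choose 2 : ℤ), (n:ℤ), (n.choose 2 : ℤ), (n:ℤ)⟩ := by
  rw [xhat_pow, yhat_pow]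
  ext <;> simp <;> ring

lemma key_commutator (n : ℕ) :
    ⁅xhat ^ n * yhat ^ n * (xhat ^ n)⁻¹,
      xhat ^ (2*n) * yhat ^ (2*n) * (xhat ^ (2*n))⁻¹⁆ = zeta (-2 * (n:ℤ)^3) := by
  rw [conj_formula, conj_formula]
  rw [commutator_eq_zeta]
  · congr 1
    push_cast
    ring
  · simp
  · push_cast; ring
  · push_cast; ring
end Uni

namespace Uni

lemma comm_mul_zeta (A B : Uni) (s t : ℤ) : ⁅A * zeta s, B * zeta t⁆ = ⁅A, B⁆ := by
  simp only [commutatorElement_def]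
  ext <;> simp [zeta] <;> ring

lemma conj_zeta (M : Uni) (t : ℤ) : M⁻¹ * zeta t * M = zeta t := by
  ext <;> simp [zeta] <;> ring

@[simp] lemma zeta_a14 (t : ℤ) : (zeta t).a14 = t := rfl

/-- the central subgroup generated by `zeta 1` -/
def ZC : Subgroup Uni := Subgroup.zpowers (zeta 1)

lemma mem_ZC_iff {M : Uni} : M ∈ ZC ↔ ∃ t : ℤ, M = zeta t := by
  constructor
  · rintro ⟨k, rfl⟩
    exact ⟨k, (zeta_zpow k).symm ▸ rfl⟩
  · rintro ⟨t, rfl⟩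
    exact ⟨t, zeta_zpow t⟩

instance ZC_normal : ZC.Normal := by
  constructor
  intro m hm g
  obtain ⟨t, rfl⟩ := mem_ZC_iff.mp hm
  have : g * zeta t * g⁻¹ = zeta t := by
    rw [← zeta_mul_comm, mul_assoc, mul_inv_cancel, mul_one]
  rw [this]
  exact mem_ZC_iff.mpr ⟨t, rfl⟩

lemma prod_zeta_bound (K : ℕ) :
    ∀ l : List Uni, (∀ A ∈ l, ∃ t : ℤ, A = zeta t ∧ t.natAbs ≤ K) →
      ∃ t : ℤ, l.prod = zeta t ∧ t.natAbs ≤ l.length * K := by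
  intro l
  induction l with
  | nil => intro _; exact ⟨0, by simp, by simp⟩
  | cons A l ih =>
    intro h
    obtain ⟨t, hA, ht⟩ := h A List.mem_cons_self
    obtain ⟨u, hl, hu⟩ := ih fun B hB => h B (List.mem_cons_of_mem _ hB)
    refine ⟨t + u, by rw [List.prod_cons, hA, hl, zeta_mul], ?_⟩
    calc (t + u).natAbs ≤ t.natAbs + u.natAbs := Int.natAbs_add_le t u
      _ ≤ K + l.length * K := by omega
      _ = (A :: l).length * K := by simp [List.length_cons]; ring

end Uni

namespace SDAux

variable {X : Type*} {R : Finset (FreeGroup X)}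

/-- list form of `ExprWith` -/
def ExprL (R : Finset (FreeGroup X)) (w : FreeGroup X) (l : List (FreeGroup X × FreeGroup X)) :
    Prop :=
  (∀ p ∈ l, p.2 ∈ R ∨ p.2⁻¹ ∈ R) ∧ w = (l.map fun p => p.1⁻¹ * p.2 * p.1).prod

lemma exprWith_of_exprL {w l} (h : ExprL R w l) : ExprWith R w l.length := by
  obtain ⟨h1, h2⟩ := h
  refine ⟨fun i => (l[(i : ℕ)]).1, fun i => (l[(i : ℕ)]).2,
    fun i => h1 _ (List.getElem_mem _), ?_⟩
  rw [h2]
  conv_lhs => rw [← List.ofFn_getElem (xs := l)]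
  rw [List.map_ofFn]
  rfl

lemma exprL_exists_of_exprWith {w N} (h : ExprWith R w N) : ∃ l, ExprL R w l ∧ l.length = N := by
  obtain ⟨θ, r, hr, hw⟩ := h
  refine ⟨List.ofFn fun i => (θ i, r i), ⟨?_, ?_⟩, List.length_ofFn⟩
  · intro p hp
    rw [List.mem_ofFn] at hp
    obtain ⟨i, rfl⟩ := hp
    exact hr i
  · rw [hw, List.map_ofFn]; rfl

lemma conj_list_prod {A : Type*} [Group A] (g : A) (l : List A) :
    (l.map fun a => g * a * g⁻¹).prod = g * l.prod * g⁻¹ := by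
  induction l with
  | nil => simp
  | cons a l ih =>
    simp only [List.map_cons, List.prod_cons, ih]
    group

/-- the subgroup of words expressible as products of conjugates of relators -/
def exprSubgroup (R : Finset (FreeGroup X)) : Subgroup (FreeGroup X) where
  carrier := {w | ∃ l, ExprL R w l}
  one_mem' := ⟨[], by simp [ExprL]⟩
  mul_mem' := by
    rintro w w' ⟨l, h1, rfl⟩ ⟨l', h1', rfl⟩
    exact ⟨l ++ l', by
      constructor
      · intro p hp
        rcases List.mem_append.mp hp with h | h
        · exact h1 p h
        · exact h1' p h
      · simp⟩
  inv_mem' := by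
    rintro w ⟨l, h1, rfl⟩
    refine ⟨(l.map fun p => (p.1, p.2⁻¹)).reverse, ?_, ?_⟩
    · intro p hp
      rw [List.mem_reverse, List.mem_map] at hp
      obtain ⟨q, hq, rfl⟩ := hp
      rcases h1 q hq with h | h
      · right; simpa using h
      · left; exact h
    · rw [List.map_reverse, List.map_map]
      have : ((fun p : FreeGroup X × FreeGroup X => p.1⁻¹ * p.2 * p.1) ∘
          fun p : FreeGroup X × FreeGroup X => (p.1, p.2⁻¹)) =
          (fun x => x⁻¹) ∘ (fun p : FreeGroup X × FreeGroup X => p.1⁻¹ * p.2 * p.1) := by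
        funext p
        simp [mul_assoc]
      rw [this, ← List.map_map, ← List.prod_inv_reverse]

instance exprSubgroup_normal : (exprSubgroup R).Normal := by
  constructor
  rintro w ⟨l, h1, rfl⟩ g
  refine ⟨l.map fun p => (p.1 * g⁻¹, p.2), ?_, ?_⟩
  · intro p hp
    rw [List.mem_map] at hp
    obtain ⟨q, hq, rfl⟩ := hp
    exact h1 q hq
  · rw [List.map_map]
    have : ((fun p : FreeGroup X × FreeGroup X => p.1⁻¹ * p.2 * p.1) ∘
        fun p : FreeGroup X × FreeGroup X => (p.1 * g⁻¹, p.2)) =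
        (fun a => g * a * g⁻¹) ∘ (fun p : FreeGroup X × FreeGroup X => p.1⁻¹ * p.2 * p.1) := by
      funext p
      simp [mul_assoc]
    rw [this, ← List.map_map, conj_list_prod]

lemma exprWith_exists {w : FreeGroup X}
    (hw : w ∈ Subgroup.normalClosure (R : Set (FreeGroup X))) : ∃ N, ExprWith R w N := by
  have : w ∈ exprSubgroup R := by
    refine Subgroup.normalClosure_le_normal ?_ hw
    intro r hr
    exact ⟨[(1, r)], by
      constructor
      · intro p hp
        simp only [List.mem_singleton] at hp
        subst hp
        exact Or.inl (Finset.mem_coe.mp hr)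
      · simp⟩
  obtain ⟨l, hl⟩ := this
  exact ⟨l.length, exprWith_of_exprL hl⟩

section WordLength

lemma wordLength_le {w : FreeGroup X} {l : List (X × Bool)} (h : FreeGroup.mk l = w) :
    wordLength w ≤ l.length :=
  Nat.sInf_le ⟨l, h, rfl⟩

lemma exists_word (w : FreeGroup X) :
    ∃ l : List (X × Bool), FreeGroup.mk l = w ∧ l.length = wordLength w := by
  classical
  have hne : {n | ∃ l : List (X × Bool), FreeGroup.mk l = w ∧ l.length = n}.Nonempty :=
    ⟨(FreeGroup.toWord w).length, FreeGroup.toWord w, FreeGroup.mk_toWord, rfl⟩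
  exact Nat.sInf_mem hne

lemma wordLength_mul_le (u v : FreeGroup X) :
    wordLength (u * v) ≤ wordLength u + wordLength v := by
  obtain ⟨l, hl, hlen⟩ := exists_word u
  obtain ⟨l', hl', hlen'⟩ := exists_word v
  have : FreeGroup.mk (l ++ l') = u * v := by rw [← FreeGroup.mul_mk, hl, hl']
  calc wordLength (u * v) ≤ (l ++ l').length := wordLength_le this
    _ = wordLength u + wordLength v := by rw [List.length_append, hlen, hlen']

lemma wordLength_inv_le (u : FreeGroup X) : wordLength u⁻¹ ≤ wordLength u := by
  obtain ⟨l, hl, hlen⟩ := exists_word u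
  have : FreeGroup.mk (FreeGroup.invRev l) = u⁻¹ := by rw [← FreeGroup.inv_mk, hl]
  calc wordLength u⁻¹ ≤ (FreeGroup.invRev l).length := wordLength_le this
    _ = wordLength u := by rw [FreeGroup.invRev_length, hlen]

lemma wordLength_pow_le (u : FreeGroup X) (n : ℕ) :
    wordLength (u ^ n) ≤ n * wordLength u := by
  induction n with
  | zero =>
    simp only [pow_zero, Nat.zero_mul, Nat.le_zero]
    exact Nat.le_zero.mp (wordLength_le (l := []) rfl)
  | succ n ih =>
    calc wordLength (u ^ (n+1)) = wordLength (u ^ n * u) := by rw [pow_succ]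
      _ ≤ wordLength (u ^ n) + wordLength u := wordLength_mul_le _ _
      _ ≤ n * wordLength u + wordLength u := by omega
      _ = (n + 1) * wordLength u := by ring

lemma wordLength_one : wordLength (1 : FreeGroup X) = 0 :=
  Nat.le_zero.mp (wordLength_le (l := []) rfl)

end WordLength

end SDAux


namespace SDAux

open Uni

lemma exprWith_zeta_bound {X : Type*} {R : Finset (FreeGroup X)} (L : FreeGroup X →* Uni)
    (K : ℕ) (hR : ∀ s : FreeGroup X, (s ∈ R ∨ s⁻¹ ∈ R) → ∃ t : ℤ, L s = zeta t ∧ t.natAbs ≤ K)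
    {w : FreeGroup X} {N : ℕ} (h : ExprWith R w N) :
    ∃ t : ℤ, L w = zeta t ∧ t.natAbs ≤ N * K := by
  obtain ⟨θ, r, hr, rfl⟩ := h
  have key : ∃ t : ℤ,
      (List.ofFn fun i => (L (θ i))⁻¹ * L (r i) * L (θ i)).prod = zeta t ∧
      t.natAbs ≤ (List.ofFn fun i => (L (θ i))⁻¹ * L (r i) * L (θ i)).length * K := by
    apply prod_zeta_bound
    intro A hA
    rw [List.mem_ofFn] at hA
    obtain ⟨i, rfl⟩ := hA
    obtain ⟨t, ht, htb⟩ := hR (r i) (hr i)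
    refine ⟨t, ?_, htb⟩
    show (L (θ i))⁻¹ * L (r i) * L (θ i) = zeta t
    rw [ht]
    exact conj_zeta _ _
  obtain ⟨t, ht, htb⟩ := key
  refine ⟨t, ?_, by rwa [List.length_ofFn] at htb⟩
  rw [map_list_prod, List.map_ofFn,
    show (⇑L ∘ fun i => (θ i)⁻¹ * r i * θ i) = fun i => (L (θ i))⁻¹ * L (r i) * L (θ i) from
      funext fun i => by simp]
  exact ht

end SDAux

section DehnAux

variable {Γ : Type*} [Group Γ]

lemma dehnSet_finite (P : FinitePresentation Γ) (n : ℕ) :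
    {A | ∃ w ∈ P.π.ker, wordLength w ≤ n ∧ area P w = A}.Finite := by
  classical
  haveI := P.fintypeX
  have h1 : {l : List (P.X × Bool) | l.length ≤ n}.Finite := List.finite_length_le _ n
  have h3 : ((area P) '' (FreeGroup.mk '' {l | l.length ≤ n})).Finite := (h1.image _).image _
  apply h3.subset
  rintro A ⟨w, hw, hlen, rfl⟩
  obtain ⟨l, hl, hlen'⟩ := SDAux.exists_word w
  exact ⟨w, ⟨l, by simp only [Set.mem_setOf_eq]; omega, hl⟩, rfl⟩

lemma area_le_dehn (P : FinitePresentation Γ) {n : ℕ} {w : FreeGroup P.X}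
    (hw : w ∈ P.π.ker) (hl : wordLength w ≤ n) : area P w ≤ dehn P n :=
  le_csSup (dehnSet_finite P n).bddAbove ⟨w, hw, hl, rfl⟩

end DehnAux



/-- If the finitely presented group `G` surjects onto a non-abelian free
group, then the Dehn function of (every finite presentation of) `𝔛(G)` is bounded below by
a cubic polynomial. -/
theorem sidkiDouble_dehn_cubic_lower_bound (G : Type) [Group G]
    (hfp : Nonempty (FinitePresentation G))
    (S : Type) (x y : S) (hxy : x ≠ y) (φ : G →* FreeGroup S)
    (hφ : Function.Surjective φ) :
    ∀ PX : FinitePresentation (SidkiDouble G), Preceq (fun n => n ^ 3) (dehn PX) := by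
  intro PX
  classical
  haveI := PX.fintypeX
  obtain ⟨a, ha⟩ := hφ (FreeGroup.of x)
  obtain ⟨b, hb⟩ := hφ (FreeGroup.of y)
  -- the two homomorphisms into the unitriangular group `Uni`
  set genA : S → Uni := fun s => if s = x then Uni.xhat else if s = y then Uni.yhat else 1
    with hgenA
  set atil : FreeGroup S →* Uni := FreeGroup.lift genA with hatil
  set btil : FreeGroup S →* Uni := FreeGroup.lift (fun s => genA s * genA s) with hbtil
  have hprop : ∀ w : FreeGroup S, (btil w).a12 = 2 * (atil w).a12 ∧
      (btil w).a23 = 2 * (atil w).a23 ∧ (btil w).a34 = 2 * (atil w).a34 := by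
    intro w
    induction w using FreeGroup.induction_on with
    | C1 => simp
    | of s =>
      have h1 : atil (FreeGroup.of s) = genA s := FreeGroup.lift_apply_of
      have h2 : btil (FreeGroup.of s) = genA s * genA s := FreeGroup.lift_apply_of
      rw [h1, h2]
      refine ⟨?_, ?_, ?_⟩ <;> simp <;> ring
    | inv_of s ih =>
      obtain ⟨i1, i2, i3⟩ := ih
      rw [map_inv, map_inv]
      refine ⟨?_, ?_, ?_⟩ <;> simp [i1, i2, i3] <;> ring
    | mul u v ihu ihv =>
      obtain ⟨i1, i2, i3⟩ := ihu
      obtain ⟨j1, j2, j3⟩ := ihv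
      rw [map_mul, map_mul]
      refine ⟨?_, ?_, ?_⟩ <;> simp [i1, i2, i3, j1, j2, j3] <;> ring
  have hcomm : ∀ g : G, ⁅atil (φ g), btil (φ g)⁆ ∈ Uni.ZC := by
    intro g
    obtain ⟨h1, h2, h3⟩ := hprop (φ g)
    rw [Uni.commutator_eq_zeta _ _ h1 h2 h3]
    exact Uni.mem_ZC_iff.mpr ⟨_, rfl⟩
  -- the quotient group and the homomorphism from the Sidki double
  set mkQ : Uni →* Uni ⧸ Uni.ZC := QuotientGroup.mk' Uni.ZC with hmkQ
  set f : Coprod G G →* Uni ⧸ Uni.ZC :=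
    Coprod.lift (mkQ.comp (atil.comp φ)) (mkQ.comp (btil.comp φ)) with hfdef
  have hf : sidkiRels G ≤ f.ker := by
    apply Subgroup.normalClosure_le_normal
    rintro _ ⟨g, rfl⟩
    rw [SetLike.mem_coe, MonoidHom.mem_ker, map_commutatorElement]
    have e1 : f (Coprod.inl g) = mkQ (atil (φ g)) := by
      rw [hfdef, Coprod.lift_apply_inl]; rfl
    have e2 : f (Coprod.inr g) = mkQ (btil (φ g)) := by
      rw [hfdef, Coprod.lift_apply_inr]; rfl
    rw [e1, e2, ← map_commutatorElement]
    exact (QuotientGroup.eq_one_iff _).mpr (hcomm g)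
  set q : SidkiDouble G →* Uni ⧸ Uni.ZC :=
    QuotientGroup.lift (sidkiRels G) f (fun w hw => MonoidHom.mem_ker.mp (hf hw)) with hqdef
  have hq1 : ∀ g : G, q (xi1 G g) = mkQ (atil (φ g)) := by
    intro g
    show q ((QuotientGroup.mk' (sidkiRels G)) (Coprod.inl g)) = _
    have e0 : q ((QuotientGroup.mk' (sidkiRels G)) (Coprod.inl g)) = f (Coprod.inl g) := by
      rw [hqdef]; exact QuotientGroup.lift_mk' _ _ _
    rw [e0, hfdef, Coprod.lift_apply_inl]; rfl
  have hq2 : ∀ g : G, q (xi2 G g) = mkQ (btil (φ g)) := by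
    intro g
    show q ((QuotientGroup.mk' (sidkiRels G)) (Coprod.inr g)) = _
    have e0 : q ((QuotientGroup.mk' (sidkiRels G)) (Coprod.inr g)) = f (Coprod.inr g) := by
      rw [hqdef]; exact QuotientGroup.lift_mk' _ _ _
    rw [e0, hfdef, Coprod.lift_apply_inr]; rfl
  -- a lift of q ∘ π through mkQ
  choose gen hgen using fun t : PX.X => QuotientGroup.mk'_surjective Uni.ZC
    (q (PX.π (FreeGroup.of t)))
  set L : FreeGroup PX.X →* Uni := FreeGroup.lift gen with hLdef
  have hL : ∀ w : FreeGroup PX.X, mkQ (L w) = q (PX.π w) := by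
    have : mkQ.comp L = q.comp PX.π := by
      apply FreeGroup.ext_hom
      intro t
      simp only [MonoidHom.comp_apply, hLdef, FreeGroup.lift_apply_of]
      exact hgen t
    intro w
    exact DFunLike.congr_fun this w
  have hker : ∀ w ∈ PX.π.ker, L w ∈ Uni.ZC := by
    intro w hw
    have h1 : mkQ (L w) = 1 := by
      rw [hL, MonoidHom.mem_ker.mp hw, map_one]
    have h2 : L w ∈ (QuotientGroup.mk' Uni.ZC).ker := by
      rw [MonoidHom.mem_ker, ← hmkQ]
      exact h1
    rwa [QuotientGroup.ker_mk'] at h2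
  -- the bound on relator areas
  set K : ℕ := PX.rels.sup fun r => (L r).a14.natAbs with hKdef
  have hrelker : ∀ r ∈ PX.rels, L r ∈ Uni.ZC := by
    intro r hr
    apply hker
    rw [PX.ker_eq]
    exact Subgroup.subset_normalClosure hr
  have hRbound : ∀ s : FreeGroup PX.X, (s ∈ PX.rels ∨ s⁻¹ ∈ PX.rels) →
      ∃ t : ℤ, L s = Uni.zeta t ∧ t.natAbs ≤ K := by
    intro s hs
    rcases hs with h | h
    · obtain ⟨t, ht⟩ := Uni.mem_ZC_iff.mp (hrelker s h)
      refine ⟨t, ht, ?_⟩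
      have h5 := Finset.le_sup (f := fun r => (L r).a14.natAbs) h
      simp only [← hKdef] at h5
      rwa [ht, Uni.zeta_a14] at h5
    · obtain ⟨t, ht⟩ := Uni.mem_ZC_iff.mp (hrelker s⁻¹ h)
      refine ⟨-t, ?_, ?_⟩
      · have : L s = (L s⁻¹)⁻¹ := by rw [map_inv, inv_inv]
        rw [this, ht, Uni.zeta_inv]
      · have h5 := Finset.le_sup (f := fun r => (L r).a14.natAbs) h
        simp only [← hKdef] at h5
        rw [ht, Uni.zeta_a14] at h5
        rwa [Int.natAbs_neg]
  -- the test words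
  obtain ⟨VA, hVA⟩ := PX.surj (xi1 G a)
  obtain ⟨VB, hVB⟩ := PX.surj (xi1 G b)
  obtain ⟨WA, hWA⟩ := PX.surj (xi2 G a)
  obtain ⟨WB, hWB⟩ := PX.surj (xi2 G b)
  set U : ℕ → FreeGroup PX.X := fun n => VA ^ n * VB ^ n * (VA ^ n)⁻¹ with hUdef
  set V : ℕ → FreeGroup PX.X := fun n => WA ^ n * WB ^ n * (WA ^ n)⁻¹ with hVdef
  set wn : ℕ → FreeGroup PX.X := fun n => ⁅U n, V n⁆ with hwndef
  set k : ℕ → G := fun n => a ^ n * b ^ n * (a ^ n)⁻¹ with hkdef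
  have hπU : ∀ n, PX.π (U n) = xi1 G (k n) := by
    intro n
    rw [hUdef, hkdef]
    simp only [map_mul, map_inv, map_pow, hVA, hVB]
  have hπV : ∀ n, PX.π (V n) = xi2 G (k n) := by
    intro n
    rw [hVdef, hkdef]
    simp only [map_mul, map_inv, map_pow, hWA, hWB]
  have hwker : ∀ n, wn n ∈ PX.π.ker := by
    intro n
    rw [MonoidHom.mem_ker, hwndef, map_commutatorElement, hπU, hπV]
    have hmem : ⁅Coprod.inl (k n), Coprod.inr (k n)⁆ ∈ sidkiRels G :=
      Subgroup.subset_normalClosure ⟨k n, rfl⟩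
    have h0 : (QuotientGroup.mk' (sidkiRels G)) ⁅Coprod.inl (k n), Coprod.inr (k n)⁆ = 1 :=
      (QuotientGroup.eq_one_iff _).mpr hmem
    rw [map_commutatorElement] at h0
    exact h0
  -- computing the images
  have hφk : ∀ n, φ (k n) =
      (FreeGroup.of x) ^ n * (FreeGroup.of y) ^ n * ((FreeGroup.of x) ^ n)⁻¹ := by
    intro n
    rw [hkdef]
    simp only [map_mul, map_inv, map_pow, ha, hb]
  have hax : atil (FreeGroup.of x) = Uni.xhat := by
    rw [hatil, FreeGroup.lift_apply_of, hgenA]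
    simp
  have hay : atil (FreeGroup.of y) = Uni.yhat := by
    rw [hatil, FreeGroup.lift_apply_of, hgenA]
    simp [hxy.symm]
  have hbx : btil (FreeGroup.of x) = Uni.xhat ^ 2 := by
    rw [hbtil, FreeGroup.lift_apply_of, hgenA]
    simp [pow_two]
  have hby : btil (FreeGroup.of y) = Uni.yhat ^ 2 := by
    rw [hbtil, FreeGroup.lift_apply_of, hgenA]
    simp [hxy.symm, pow_two]
  have hqU : ∀ n, q (PX.π (U n)) =
      mkQ (Uni.xhat ^ n * Uni.yhat ^ n * (Uni.xhat ^ n)⁻¹) := by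
    intro n
    rw [hπU, hq1, hφk]
    simp only [map_mul, map_inv, map_pow, hax, hay]
  have hqV : ∀ n, q (PX.π (V n)) =
      mkQ (Uni.xhat ^ (2 * n) * Uni.yhat ^ (2 * n) * (Uni.xhat ^ (2 * n))⁻¹) := by
    intro n
    rw [hπV, hq2, hφk]
    simp only [map_mul, map_inv, map_pow, hbx, hby]
    rw [pow_mul, pow_mul]
  -- the corner entry of L (wn n)
  have hLwn : ∀ n : ℕ, L (wn n) = Uni.zeta (-2 * (n : ℤ) ^ 3) := by
    intro n
    have hU' : mkQ (Uni.xhat ^ n * Uni.yhat ^ n * (Uni.xhat ^ n)⁻¹) = mkQ (L (U n)) := by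
      rw [hL, hqU]
    have hV' : mkQ (Uni.xhat ^ (2*n) * Uni.yhat ^ (2*n) * (Uni.xhat ^ (2*n))⁻¹)
        = mkQ (L (V n)) := by
      rw [hL, hqV]
    obtain ⟨z1, hz1m, hz1⟩ := (QuotientGroup.mk'_eq_mk' Uni.ZC).mp hU'
    obtain ⟨z2, hz2m, hz2⟩ := (QuotientGroup.mk'_eq_mk' Uni.ZC).mp hV'
    obtain ⟨s, rfl⟩ := Uni.mem_ZC_iff.mp hz1m
    obtain ⟨t, rfl⟩ := Uni.mem_ZC_iff.mp hz2m
    rw [hwndef]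
    rw [map_commutatorElement, ← hz1, ← hz2, Uni.comm_mul_zeta, Uni.key_commutator]
  -- the area lower bound
  have harea : ∀ n : ℕ, 2 * n ^ 3 ≤ area PX (wn n) * K := by
    intro n
    have hmem : wn n ∈ Subgroup.normalClosure (PX.rels : Set (FreeGroup PX.X)) := by
      rw [← PX.ker_eq]; exact hwker n
    obtain ⟨N0, hN0⟩ := SDAux.exprWith_exists hmem
    have hne : {N | ExprWith PX.rels (wn n) N}.Nonempty := ⟨N0, hN0⟩
    have hsinf : ExprWith PX.rels (wn n) (area PX (wn n)) := Nat.sInf_mem hne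
    obtain ⟨t, ht, htb⟩ := SDAux.exprWith_zeta_bound L K hRbound hsinf
    have hteq : t = -2 * (n : ℤ) ^ 3 := by
      have := ht.symm.trans (hLwn n)
      exact congrArg Uni.a14 this
    rw [hteq] at htb
    have hnat : ((-2 : ℤ) * (n : ℤ) ^ 3).natAbs = 2 * n ^ 3 := by
      have h1 : (-2 : ℤ) * (n : ℤ) ^ 3 = -(((2 * n ^ 3 : ℕ) : ℤ)) := by push_cast; ring
      rw [h1, Int.natAbs_neg, Int.natAbs_natCast]
    rwa [hnat] at htb
  -- word length bound
  set c1 : ℕ := wordLength VA + wordLength VB + wordLength WA + wordLength WB + 1 with hc1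
  have hlenU : ∀ n, wordLength (U n) ≤ 3 * c1 * n := by
    intro n
    calc wordLength (U n) ≤ wordLength (VA ^ n * VB ^ n) + wordLength ((VA ^ n)⁻¹) :=
          SDAux.wordLength_mul_le _ _
      _ ≤ wordLength (VA ^ n) + wordLength (VB ^ n) + wordLength (VA ^ n) := by
          have h1 := SDAux.wordLength_mul_le (VA ^ n) (VB ^ n)
          have h2 := SDAux.wordLength_inv_le (VA ^ n)
          omega
      _ ≤ n * wordLength VA + n * wordLength VB + n * wordLength VA := by
          have h1 := SDAux.wordLength_pow_le VA n
          have h2 := SDAux.wordLength_pow_le VB n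
          omega
      _ ≤ 3 * c1 * n := by
          have h1 : wordLength VA ≤ c1 := by omega
          have h2 : wordLength VB ≤ c1 := by omega
          have h3 := Nat.mul_le_mul_left n h1
          have h4 := Nat.mul_le_mul_left n h2
          nlinarith
  have hlenV : ∀ n, wordLength (V n) ≤ 3 * c1 * n := by
    intro n
    calc wordLength (V n) ≤ wordLength (WA ^ n * WB ^ n) + wordLength ((WA ^ n)⁻¹) :=
          SDAux.wordLength_mul_le _ _
      _ ≤ wordLength (WA ^ n) + wordLength (WB ^ n) + wordLength (WA ^ n) := by
          have h1 := SDAux.wordLength_mul_le (WA ^ n) (WB ^ n)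
          have h2 := SDAux.wordLength_inv_le (WA ^ n)
          omega
      _ ≤ n * wordLength WA + n * wordLength WB + n * wordLength WA := by
          have h1 := SDAux.wordLength_pow_le WA n
          have h2 := SDAux.wordLength_pow_le WB n
          omega
      _ ≤ 3 * c1 * n := by
          have h1 : wordLength WA ≤ c1 := by omega
          have h2 : wordLength WB ≤ c1 := by omega
          have h3 := Nat.mul_le_mul_left n h1
          have h4 := Nat.mul_le_mul_left n h2
          nlinarith
  have hlen : ∀ n, wordLength (wn n) ≤ 12 * c1 * n := by
    intro n
    have e : wn n = U n * V n * (U n)⁻¹ * (V n)⁻¹ := commutatorElement_def (U n) (V n)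
    rw [e]
    have h1 := SDAux.wordLength_mul_le (U n * V n * (U n)⁻¹) ((V n)⁻¹)
    have h2 := SDAux.wordLength_mul_le (U n * V n) ((U n)⁻¹)
    have h3 := SDAux.wordLength_mul_le (U n) (V n)
    have h4 := SDAux.wordLength_inv_le (U n)
    have h5 := SDAux.wordLength_inv_le (V n)
    have h6 := hlenU n
    have h7 := hlenV n
    linarith
  -- assemble
  refine ⟨12 * c1 + K + 1, by omega, ?_⟩
  intro n
  set C : ℕ := 12 * c1 + K + 1 with hC
  have hwl : wordLength (wn n) ≤ C * n + C := by
    have := hlen n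
    have : 12 * c1 * n ≤ C * n := by
      have : 12 * c1 ≤ C := by omega
      exact Nat.mul_le_mul_right n this
    omega
  have hd : area PX (wn n) ≤ dehn PX (C * n + C) := area_le_dehn PX (hwker n) hwl
  have h2 : 2 * n ^ 3 ≤ dehn PX (C * n + C) * K := by
    calc 2 * n ^ 3 ≤ area PX (wn n) * K := harea n
      _ ≤ dehn PX (C * n + C) * K := Nat.mul_le_mul_right K hd
  have h3 : dehn PX (C * n + C) * K ≤ C * dehn PX (C * n + C) := by
    rw [Nat.mul_comm]
    apply Nat.mul_le_mul_right
    omega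
  calc n ^ 3 ≤ 2 * n ^ 3 := by omega
    _ ≤ C * dehn PX (C * n + C) := le_trans h2 h3
    _ ≤ C * dehn PX (C * n + C) + C * n + C := by omega
end

section
/- Let F be the free group on two generators a, b, and work in 𝔛(F) with ℓ_x := ι₁(x)⁻¹ι₂(x) for x ∈ F. Let S_L = {ℓ_a, ℓ_b, ℓ_aℓ_bℓ_{ab}⁻¹}, a generating set of L, and S = S_L ∪ {ι₁(a), ι₁(b)}, a generating set of 𝔛(F). For every n ≥ 1 the element c_n := ℓ_{aⁿ}ℓ_{bⁿ}ℓ_{aⁿbⁿ}⁻¹ lies in L, is a product of at most 6n elements of S ∪ S⁻¹, and is not a product of fewer than n² elements of S_L ∪ S_L⁻¹. Consequently the distortion of L in 𝔛(F) satisfies dist_L^{𝔛(F)}(n) ≽ n². -/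
open Monoid
open scoped commutatorElement

/-- Word length of `h` with respect to the (symmetrised) generating set `S`;
junk value `sInf ∅ = 0` if `h` is not a product of elements of `S ∪ S⁻¹`. -/
noncomputable def genLength {H : Type*} [Group H] (S : Set H) (h : H) : ℕ :=
  sInf {k | ∃ l : List H, l.prod = h ∧ l.length = k ∧ ∀ x ∈ l, x ∈ S ∨ x⁻¹ ∈ S}

section Statement10

abbrev F2 := FreeGroup Bool

noncomputable def aGen : F2 := FreeGroup.of false
noncomputable def bGen : F2 := FreeGroup.of true

/-- `ℓ_x = x⁻¹ x̄ ∈ 𝔛(F)`. -/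
noncomputable def ell (x : F2) : SidkiDouble F2 := (xi1 F2 x)⁻¹ * xi2 F2 x

/-- The generating set `{ℓ_a, ℓ_b, ℓ_a ℓ_b ℓ_{ab}⁻¹}` of `L`. -/
noncomputable def SL : Set (SidkiDouble F2) :=
  {ell aGen, ell bGen, ell aGen * ell bGen * (ell (aGen * bGen))⁻¹}

/-- The generating set `S_L ∪ {a, b}` of `𝔛(F)`. -/
noncomputable def SX : Set (SidkiDouble F2) := SL ∪ {xi1 F2 aGen, xi1 F2 bGen}

/-- `c_n = ℓ_{aⁿ} ℓ_{bⁿ} ℓ_{aⁿbⁿ}⁻¹`. -/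
noncomputable def cElt (n : ℕ) : SidkiDouble F2 :=
  ell (aGen ^ n) * ell (bGen ^ n) * (ell (aGen ^ n * bGen ^ n))⁻¹

/-- The distortion function of `L` in `𝔛(F)` with respect to `S_L` and `S`. -/
noncomputable def distLX : ℕ → ℕ := fun n =>
  sSup {m | ∃ h ∈ sidkiL F2, genLength SX h ≤ n ∧ genLength SL h = m}

namespace Statement10Aux

open Subgroup

lemma pr_xi1 {G : Type*} [Group G] (g : G) : sidkiPr G (xi1 G g) = g := rfl

lemma pr_xi2 {G : Type*} [Group G] (g : G) : sidkiPr G (xi2 G g) = g := rfl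

lemma comm_xi (g : F2) : Commute (xi1 F2 g) (xi2 F2 g) := by
  rw [← commutatorElement_eq_one_iff_commute]
  have h : ⁅xi1 F2 g, xi2 F2 g⁆
      = (QuotientGroup.mk' (sidkiRels F2)) ⁅(Coprod.inl g : Coprod F2 F2), Coprod.inr g⁆ := by
    rfl
  rw [h, QuotientGroup.mk'_apply]
  refine (QuotientGroup.eq_one_iff (N := sidkiRels F2) _).mpr ?_
  exact Subgroup.subset_normalClosure ⟨g, rfl⟩

lemma pr_ell (g : F2) : sidkiPr F2 (ell g) = 1 := by
  simp [ell, pr_xi1, pr_xi2]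

lemma ell_mem_L (g : F2) : ell g ∈ sidkiL F2 := by
  simp [sidkiL, MonoidHom.mem_ker, pr_ell]

end Statement10Aux
namespace Statement10Aux

open Subgroup

section AbstractIdent
variable {H : Type*} [Group H]

lemma commCons {c d : H} (h : Commute c d) (x : H) : c*(d*x) = d*(c*x) := by
  rw [← mul_assoc, h.eq, mul_assoc]

lemma lemV1 {A A' B B' : H} (h1 : Commute A A') (h2 : Commute B B')
    (h3 : Commute (B⁻¹*A) (B'⁻¹*A')) :
    A⁻¹*(B⁻¹*B')*A = (A⁻¹*A')*(B⁻¹*B')*((A*B)⁻¹*(A'*B'))⁻¹*(B⁻¹*B') := by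
  have key : B⁻¹*(A*(A'⁻¹*B')) = A'⁻¹*(B'*(B⁻¹*A)) := by
    have h := h3.inv_right.eq
    simp only [mul_inv_rev, inv_inv, mul_assoc] at h
    simpa [mul_assoc] using h
  simp only [mul_inv_rev, inv_inv, mul_assoc, mul_inv_cancel_left, inv_mul_cancel_left]
  rw [mul_right_inj, commCons h2.inv_left, commCons h1.symm.inv_left, key, mul_inv_cancel_left]

lemma lemV2 {A A' B B' : H} (h2 : Commute B B')
    (h4 : Commute (A*B) (A'*B')) :
    A⁻¹*((A*B)⁻¹*(A'*B'))*A = (A⁻¹*A')*(B⁻¹*B') := by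
  have h4c : ∀ x : H, A*(B*(A'*(B'*x))) = A'*(B'*(A*(B*x))) := by
    intro x
    have h := commCons h4 x
    simpa [mul_assoc] using h
  have h5 : A'*(B'*A) = A*(B*(A'*(B'*B⁻¹))) := by rw [h4c]; simp
  simp only [mul_inv_rev, inv_inv, mul_assoc]
  rw [mul_right_inj, h5, inv_mul_cancel_left, inv_mul_cancel_left, h2.inv_left.eq]

lemma lemC0 {A A' B B' : H} (h1 : Commute A A')
    (h5 : Commute (A⁻¹*(B*A)) (A'⁻¹*(B'*A'))) :
    Commute B ((A⁻¹*A')⁻¹*(B'*(A⁻¹*A'))) := by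
  have h := h5.map (MulAut.conj A).toMonoidHom
  simp only [MulEquiv.coe_toMonoidHom, MulAut.conj_apply] at h
  have e1 : A * (A⁻¹*(B*A)) * A⁻¹ = B := by group
  rw [e1] at h
  have e2 : A * (A'⁻¹*(B'*A')) * A⁻¹ = (A⁻¹*A')⁻¹*(B'*(A⁻¹*A')) := by
    simp only [mul_inv_rev, inv_inv, mul_assoc]
    rw [commCons h1.inv_right, h1.symm.inv_right.eq]
  rw [e2] at h
  exact h

lemma lemV3 {u B B' : H} (h2 : Commute B B') (c0 : Commute B (u⁻¹*(B'*u))) :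
    B⁻¹*(B⁻¹*(u*B'))*B
      = (B⁻¹*B')*((u*((B⁻¹*B')*(B⁻¹*(u*B'))⁻¹))⁻¹*((B⁻¹*B')⁻¹*(B⁻¹*(u*B')))) := by
  have c1 : ∀ x : H, B*(u⁻¹*(B'⁻¹*(u*x))) = u⁻¹*(B'⁻¹*(u*(B*x))) := by
    intro x
    have h := commCons c0.inv_right x
    simp only [mul_inv_rev, inv_inv, mul_assoc] at h
    simpa [mul_assoc] using h
  simp only [mul_inv_rev, inv_inv, mul_assoc, mul_inv_cancel_left, inv_mul_cancel_left]
  rw [mul_right_inj, c1, mul_inv_cancel_left, commCons (h2.inv_left.inv_right),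
    mul_inv_cancel_left, h2.symm.eq]

lemma conj_fix {g x : H} (h : Commute g x) : g⁻¹ * x * g = x := by
  rw [mul_assoc, ← h.eq, inv_mul_cancel_left]

lemma conj_rev {g x y : H} (h : g⁻¹*x*g = y) : g*y*g⁻¹ = x := by rw [← h]; group

lemma conj_mul (g x y : H) : g⁻¹*(x*y)*g = (g⁻¹*x*g)*(g⁻¹*y*g) := by group

lemma conj_inv (g x : H) : g⁻¹*x⁻¹*g = (g⁻¹*x*g)⁻¹ := by group

end AbstractIdent

-- ## The generators and their conjugates

noncomputable def gA : SidkiDouble F2 := xi1 F2 aGen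
noncomputable def gA' : SidkiDouble F2 := xi2 F2 aGen
noncomputable def gB : SidkiDouble F2 := xi1 F2 bGen
noncomputable def gB' : SidkiDouble F2 := xi2 F2 bGen
noncomputable def uE : SidkiDouble F2 := ell aGen
noncomputable def vE : SidkiDouble F2 := ell bGen
noncomputable def tE : SidkiDouble F2 := ell (aGen * bGen)
noncomputable def sE : SidkiDouble F2 := uE * vE * tE⁻¹

lemma uE_eq : uE = gA⁻¹ * gA' := rfl
lemma vE_eq : vE = gB⁻¹ * gB' := rfl
lemma tE_eq : tE = (gA*gB)⁻¹*(gA'*gB') := by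
  show (xi1 F2 (aGen * bGen))⁻¹ * xi2 F2 (aGen * bGen) = _
  rw [map_mul, map_mul]; rfl

lemma k1 : Commute gA gA' := comm_xi aGen
lemma k2 : Commute gB gB' := comm_xi bGen
lemma k3 : Commute (gB⁻¹*gA) (gB'⁻¹*gA') := by
  have h := comm_xi (bGen⁻¹ * aGen); simp only [map_mul, map_inv] at h; exact h
lemma k4 : Commute (gA*gB) (gA'*gB') := by
  have h := comm_xi (aGen * bGen); simp only [map_mul] at h; exact h
lemma k5 : Commute (gA⁻¹*(gB*gA)) (gA'⁻¹*(gB'*gA')) := by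
  have h := comm_xi (aGen⁻¹ * (bGen * aGen)); simp only [map_mul, map_inv] at h; exact h

lemma conjA_u : gA⁻¹ * uE * gA = uE := by
  rw [uE_eq]
  exact conj_fix ((Commute.refl gA).inv_right.mul_right k1)

lemma conjA_v : gA⁻¹ * vE * gA = sE * vE := by
  rw [sE, uE_eq, vE_eq, tE_eq]
  exact lemV1 k1 k2 k3

lemma conjA_t : gA⁻¹ * tE * gA = uE * vE := by
  rw [uE_eq, vE_eq, tE_eq]
  exact lemV2 k2 k4

lemma conjB_u : gB⁻¹ * uE * gB = tE * vE⁻¹ := by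
  rw [uE_eq, vE_eq, tE_eq]; group

lemma conjB_v : gB⁻¹ * vE * gB = vE := by
  rw [vE_eq]
  exact conj_fix ((Commute.refl gB).inv_right.mul_right k2)

lemma tE_eq2 : tE = gB⁻¹*(uE*gB') := by rw [tE_eq, uE_eq]; group

lemma conjB_t : gB⁻¹ * tE * gB = vE*(sE⁻¹*(vE⁻¹*tE)) := by
  have c0 : Commute gB (uE⁻¹*(gB'*uE)) := by
    rw [uE_eq]; exact lemC0 k1 k5
  have h := lemV3 k2 c0
  rw [← tE_eq2, ← vE_eq] at h
  rw [h, sE]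
  group

lemma conjA'_u : gA * uE * gA⁻¹ = uE := conj_rev conjA_u

lemma conjA'_v : gA * vE * gA⁻¹ = uE⁻¹*tE := by
  apply conj_rev
  rw [conj_mul, conj_inv, conjA_u, conjA_t]
  group

lemma conjA'_t : gA * tE * gA⁻¹ = uE⁻¹*(tE*(vE⁻¹*tE)) := by
  apply conj_rev
  rw [conj_mul, conj_mul, conj_mul, conj_inv, conj_inv, conjA_u, conjA_v, conjA_t, sE]
  group

lemma conjB'_u : gB * uE * gB⁻¹ = vE⁻¹*(sE*(vE*uE)) := by
  apply conj_rev
  rw [conj_mul, conj_mul, conj_mul, conj_inv, conjB_v, conjB_u, sE, conj_mul, conj_mul,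
    conj_inv, conjB_u, conjB_v, conjB_t, sE]
  group

lemma conjB'_v : gB * vE * gB⁻¹ = vE := conj_rev conjB_v

lemma conjB'_t : gB * tE * gB⁻¹ = uE * vE := by
  apply conj_rev
  rw [conj_mul, conjB_u, conjB_v]
  group

end Statement10Aux
namespace Statement10Aux

open Subgroup

noncomputable def CC : Subgroup (SidkiDouble F2) := Subgroup.closure SL

lemma uE_mem : uE ∈ CC := subset_closure (by simp [SL, uE])
lemma vE_mem : vE ∈ CC := subset_closure (by simp [SL, vE])
lemma sE_mem : sE ∈ CC := subset_closure (by simp [SL, sE, uE, vE, tE])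

lemma tE_mem : tE ∈ CC := by
  have h : tE = sE⁻¹*(uE*vE) := by rw [sE]; group
  rw [h]
  exact mul_mem (inv_mem sE_mem) (mul_mem uE_mem vE_mem)

lemma conj_mem_of_gen (g : SidkiDouble F2)
    (hu : g⁻¹*uE*g ∈ CC) (hv : g⁻¹*vE*g ∈ CC) (ht : g⁻¹*tE*g ∈ CC) :
    ∀ c ∈ CC, g⁻¹*c*g ∈ CC := by
  intro c hc
  have hle : CC ≤ Subgroup.comap ((MulAut.conj g⁻¹).toMonoidHom) CC := by
    rw [CC, Subgroup.closure_le]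
    rintro x hx
    rw [SL] at hx
    simp only [Set.mem_insert_iff, Set.mem_singleton_iff] at hx
    simp only [Set.mem_preimage, SetLike.mem_coe, Subgroup.mem_comap,
      MulEquiv.coe_toMonoidHom, MulAut.conj_apply, inv_inv]
    rcases hx with rfl | rfl | rfl
    · exact hu
    · exact hv
    · have hs : g⁻¹*(ell aGen * ell bGen * (ell (aGen * bGen))⁻¹)*g
          = (g⁻¹*uE*g) * (g⁻¹*vE*g) * (g⁻¹*tE*g)⁻¹ := by
        rw [uE, vE, tE]; group
      rw [hs]
      exact mul_mem (mul_mem hu hv) (inv_mem ht)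
  have h2 := hle hc
  simpa only [Subgroup.mem_comap, MulEquiv.coe_toMonoidHom, MulAut.conj_apply, inv_inv] using h2

lemma stabA : ∀ c ∈ CC, gA⁻¹*c*gA ∈ CC :=
  conj_mem_of_gen gA (by rw [conjA_u]; exact uE_mem)
    (by rw [conjA_v]; exact mul_mem sE_mem vE_mem)
    (by rw [conjA_t]; exact mul_mem uE_mem vE_mem)

lemma stabA' : ∀ c ∈ CC, gA*c*gA⁻¹ ∈ CC := by
  have h := conj_mem_of_gen gA⁻¹
    (by rw [inv_inv, conjA'_u]; exact uE_mem)
    (by rw [inv_inv, conjA'_v]; exact mul_mem (inv_mem uE_mem) tE_mem)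
    (by rw [inv_inv, conjA'_t]
        exact mul_mem (inv_mem uE_mem) (mul_mem tE_mem (mul_mem (inv_mem vE_mem) tE_mem)))
  intro c hc
  simpa only [inv_inv] using h c hc

lemma stabB : ∀ c ∈ CC, gB⁻¹*c*gB ∈ CC :=
  conj_mem_of_gen gB (by rw [conjB_u]; exact mul_mem tE_mem (inv_mem vE_mem))
    (by rw [conjB_v]; exact vE_mem)
    (by rw [conjB_t]
        exact mul_mem vE_mem (mul_mem (inv_mem sE_mem) (mul_mem (inv_mem vE_mem) tE_mem)))

lemma stabB' : ∀ c ∈ CC, gB*c*gB⁻¹ ∈ CC := by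
  have h := conj_mem_of_gen gB⁻¹
    (by rw [inv_inv, conjB'_u]
        exact mul_mem (inv_mem vE_mem) (mul_mem sE_mem (mul_mem vE_mem uE_mem)))
    (by rw [inv_inv, conjB'_v]; exact vE_mem)
    (by rw [inv_inv, conjB'_t]; exact mul_mem uE_mem vE_mem)
  intro c hc
  simpa only [inv_inv] using h c hc

lemma stab_all : ∀ g : F2, ∀ c ∈ CC,
    (xi1 F2 g)⁻¹*c*(xi1 F2 g) ∈ CC ∧ (xi1 F2 g)*c*(xi1 F2 g)⁻¹ ∈ CC := by
  intro g
  induction g using FreeGroup.induction_on with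
  | C1 => intro c hc; rw [map_one]; simp only [inv_one, one_mul, mul_one]; exact ⟨hc, hc⟩
  | of x =>
    cases x with
    | false => exact fun c hc => ⟨stabA c hc, stabA' c hc⟩
    | true => exact fun c hc => ⟨stabB c hc, stabB' c hc⟩
  | inv_of x ih =>
    intro c hc
    have h := ih c hc
    rw [map_inv]
    simpa only [inv_inv] using ⟨h.2, h.1⟩
  | mul g h ihg ihh =>
    intro c hc
    rw [map_mul]
    constructor
    · have e : (xi1 F2 g * xi1 F2 h)⁻¹*c*(xi1 F2 g * xi1 F2 h)
          = (xi1 F2 h)⁻¹*((xi1 F2 g)⁻¹*c*(xi1 F2 g))*(xi1 F2 h) := by group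
      rw [e]
      exact (ihh _ ((ihg c hc).1)).1
    · have e : (xi1 F2 g * xi1 F2 h)*c*(xi1 F2 g * xi1 F2 h)⁻¹
          = (xi1 F2 g)*((xi1 F2 h)*c*(xi1 F2 h)⁻¹)*(xi1 F2 g)⁻¹ := by group
      rw [e]
      exact (ihg _ ((ihh c hc).2)).2

lemma ell_one : ell (1 : F2) = 1 := by simp [ell]

lemma ell_inv (g : F2) : ell g⁻¹ = xi1 F2 g * (ell g)⁻¹ * (xi1 F2 g)⁻¹ := by
  rw [ell, ell, map_inv, map_inv]; group

lemma ell_mul (g h : F2) : ell (g*h) = (xi1 F2 h)⁻¹ * (ell g) * (xi1 F2 h) * ell h := by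
  rw [ell, ell, ell, map_mul, map_mul]; group

lemma ellC : ∀ g : F2, ell g ∈ CC := by
  intro g
  induction g using FreeGroup.induction_on with
  | C1 => rw [ell_one]; exact one_mem _
  | of x =>
    cases x with
    | false => exact uE_mem
    | true => exact vE_mem
  | inv_of x ih => rw [ell_inv]; exact (stab_all _ _ (inv_mem ih)).2
  | mul g h ihg ihh =>
    rw [ell_mul]
    exact mul_mem (stab_all h _ ihg).1 ihh

lemma xi2_eq (g : F2) : xi2 F2 g = xi1 F2 g * ell g := by
  rw [ell, mul_inv_cancel_left]

noncomputable def QQ : Subgroup (SidkiDouble F2) where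
  carrier := {x | ∃ g : F2, ∃ c ∈ CC, x = xi1 F2 g * c}
  one_mem' := ⟨1, 1, one_mem _, by simp⟩
  mul_mem' := by
    rintro x y ⟨g, c, hc, rfl⟩ ⟨h, c', hc', rfl⟩
    refine ⟨g*h, ((xi1 F2 h)⁻¹*c*(xi1 F2 h)) * c',
      mul_mem (stab_all h c hc).1 hc', ?_⟩
    rw [map_mul]; group
  inv_mem' := by
    rintro x ⟨g, c, hc, rfl⟩
    refine ⟨g⁻¹, (xi1 F2 g)*c⁻¹*(xi1 F2 g)⁻¹, (stab_all g _ (inv_mem hc)).2, ?_⟩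
    rw [map_inv]; group

lemma QQ_top : ∀ x : SidkiDouble F2, x ∈ QQ := by
  intro x
  obtain ⟨y, rfl⟩ := QuotientGroup.mk'_surjective (sidkiRels F2) x
  induction y using Coprod.induction_on with
  | inl g => exact ⟨g, 1, one_mem _, by simp; rfl⟩
  | inr g => exact ⟨g, ell g, ellC g, xi2_eq g⟩
  | mul x y ihx ihy =>
    rw [map_mul]
    exact mul_mem ihx ihy

lemma CC_le_L : CC ≤ sidkiL F2 := by
  rw [CC, Subgroup.closure_le, SL]
  rintro x hx
  simp only [Set.mem_insert_iff, Set.mem_singleton_iff] at hx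
  rcases hx with rfl | rfl | rfl
  · exact ell_mem_L aGen
  · exact ell_mem_L bGen
  · exact mul_mem (mul_mem (ell_mem_L _) (ell_mem_L _)) (inv_mem (ell_mem_L _))

lemma part1 : Subgroup.closure SL = sidkiL F2 := by
  refine le_antisymm CC_le_L ?_
  intro x hx
  obtain ⟨g, c, hc, rfl⟩ := QQ_top x
  have hprc : sidkiPr F2 c = 1 := CC_le_L hc
  have hg : g = 1 := by
    have h1 : sidkiPr F2 (xi1 F2 g * c) = 1 := hx
    rwa [map_mul, pr_xi1, hprc, mul_one] at h1
  rw [hg, map_one, one_mul]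
  exact hc

lemma part2 : Subgroup.closure SX = ⊤ := by
  rw [eq_top_iff']
  intro x
  have hA : xi1 F2 aGen ∈ Subgroup.closure SX :=
    subset_closure (by rw [SX]; right; left; rfl)
  have hB : xi1 F2 bGen ∈ Subgroup.closure SX :=
    subset_closure (by rw [SX]; right; right; rfl)
  have hxi1 : ∀ g : F2, xi1 F2 g ∈ Subgroup.closure SX := by
    intro g
    induction g using FreeGroup.induction_on with
    | C1 => simpa using one_mem _
    | of x => cases x with
      | false => exact hA
      | true => exact hB
    | inv_of x ih => rw [map_inv]; exact inv_mem ih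
    | mul g h ihg ihh => rw [map_mul]; exact mul_mem ihg ihh
  have hC : CC ≤ Subgroup.closure SX := by
    rw [CC]
    exact Subgroup.closure_mono (by rw [SX]; exact Set.subset_union_left)
  obtain ⟨y, rfl⟩ := QuotientGroup.mk'_surjective (sidkiRels F2) x
  induction y using Coprod.induction_on with
  | inl g => exact hxi1 g
  | inr g => rw [show ((QuotientGroup.mk' (sidkiRels F2)) (Coprod.inr g)) = xi2 F2 g from rfl,
      xi2_eq g]; exact mul_mem (hxi1 g) (hC (ellC g))
  | mul x y ihx ihy => rw [map_mul]; exact mul_mem ihx ihy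

end Statement10Aux
namespace Statement10Aux

@[ext]
structure Heis where
  x : ℤ
  y : ℤ
  z : ℤ

namespace Heis

instance : Mul Heis := ⟨fun a b => ⟨a.x + b.x, a.y + b.y, a.z + b.z + a.x * b.y⟩⟩
instance : One Heis := ⟨⟨0,0,0⟩⟩
instance : Inv Heis := ⟨fun a => ⟨-a.x, -a.y, -a.z + a.x * a.y⟩⟩

@[simp] lemma mul_def (a b : Heis) :
    a * b = ⟨a.x + b.x, a.y + b.y, a.z + b.z + a.x * b.y⟩ := rfl
@[simp] lemma one_def : (1 : Heis) = ⟨0,0,0⟩ := rfl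
@[simp] lemma inv_def (a : Heis) : a⁻¹ = ⟨-a.x, -a.y, -a.z + a.x * a.y⟩ := rfl

instance : Group Heis where
  mul_assoc a b c := by ext <;> simp <;> ring
  one_mul a := by ext <;> simp
  mul_one a := by ext <;> simp
  inv_mul_cancel a := by ext <;> simp [mul_comm]

lemma xpow (d : ℤ) : ∀ n : ℕ, (⟨d,0,0⟩ : Heis) ^ n = ⟨d * n, 0, 0⟩
  | 0 => by rw [pow_zero]; ext <;> simp
  | (n+1) => by rw [pow_succ, xpow d n]; ext <;> simp <;> ring

lemma ypow (d : ℤ) : ∀ n : ℕ, (⟨0,d,0⟩ : Heis) ^ n = ⟨0, d * n, 0⟩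
  | 0 => by rw [pow_zero]; ext <;> simp
  | (n+1) => by rw [pow_succ, ypow d n]; ext <;> simp <;> ring

end Heis

/-- first factor map: a ↦ X, b ↦ Y -/
noncomputable def phiH : F2 →* Heis :=
  FreeGroup.lift (fun i => if i then (⟨0,1,0⟩ : Heis) else ⟨1,0,0⟩)

/-- second factor map: a ↦ X^p, b ↦ Y^p -/
noncomputable def psiH (p : ℤ) : F2 →* Heis :=
  FreeGroup.lift (fun i => if i then (⟨0,p,0⟩ : Heis) else ⟨p,0,0⟩)

lemma phi_psi_prop (p : ℤ) : ∀ g : F2,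
    (psiH p g).x = p * (phiH g).x ∧ (psiH p g).y = p * (phiH g).y := by
  intro g
  induction g using FreeGroup.induction_on with
  | C1 => simp
  | of i =>
    cases i <;>
      simp [phiH, psiH, show ∀ i : Bool, (pure i : F2) = FreeGroup.of i from fun _ => rfl,
        FreeGroup.lift_apply_of]
  | inv_of i ih =>
    rw [map_inv, map_inv]
    simpa using ih
  | mul g h ihg ihh =>
    rw [map_mul, map_mul]
    simp only [Heis.mul_def]
    constructor <;> [skip; skip] <;> simp [ihg.1, ihg.2, ihh.1, ihh.2] <;> ring

lemma phi_psi_commute (p : ℤ) (g : F2) : Commute (phiH g) (psiH p g) := by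
  obtain ⟨hx, hy⟩ := phi_psi_prop p g
  show _ = _
  ext <;> simp [hx, hy] <;> ring

noncomputable def thetaH (p : ℤ) : SidkiDouble F2 →* Heis :=
  QuotientGroup.lift (sidkiRels F2) (Coprod.lift phiH (psiH p)) (by
    intro x hx
    have h : sidkiRels F2 ≤ (Coprod.lift phiH (psiH p)).ker := by
      apply Subgroup.normalClosure_le_normal
      rintro y ⟨g, rfl⟩
      simp only [SetLike.mem_coe, MonoidHom.mem_ker, map_commutatorElement,
        Coprod.lift_apply_inl, Coprod.lift_apply_inr]
      exact commutatorElement_eq_one_iff_commute.mpr (phi_psi_commute p g)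
    exact h hx)

end Statement10Aux
namespace Statement10Aux

lemma theta_xi1 (p : ℤ) (g : F2) : thetaH p (xi1 F2 g) = phiH g := rfl
lemma theta_xi2 (p : ℤ) (g : F2) : thetaH p (xi2 F2 g) = psiH p g := rfl

lemma phi_a : phiH aGen = ⟨1,0,0⟩ := by
  rw [aGen, phiH, FreeGroup.lift_apply_of]; rfl
lemma phi_b : phiH bGen = ⟨0,1,0⟩ := by
  rw [bGen, phiH, FreeGroup.lift_apply_of]; rfl
lemma psi_a (p : ℤ) : psiH p aGen = ⟨p,0,0⟩ := by
  rw [aGen, psiH, FreeGroup.lift_apply_of]; rfl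
lemma psi_b (p : ℤ) : psiH p bGen = ⟨0,p,0⟩ := by
  rw [bGen, psiH, FreeGroup.lift_apply_of]; rfl

lemma theta_ell (p : ℤ) (g : F2) :
    thetaH p (ell g) = (phiH g)⁻¹ * psiH p g := by
  rw [ell, map_mul, map_inv, theta_xi1, theta_xi2]

lemma theta_ell_apow (p : ℤ) (n : ℕ) :
    thetaH p (ell (aGen ^ n)) = ⟨(p-1)*n, 0, 0⟩ := by
  rw [theta_ell, map_pow, map_pow, phi_a, psi_a, Heis.xpow, Heis.xpow]
  ext <;> simp <;> ring

lemma theta_ell_bpow (p : ℤ) (n : ℕ) :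
    thetaH p (ell (bGen ^ n)) = ⟨0, (p-1)*n, 0⟩ := by
  rw [theta_ell, map_pow, map_pow, phi_b, psi_b, Heis.ypow, Heis.ypow]
  ext <;> simp <;> ring

lemma theta_ell_abpow (p : ℤ) (n : ℕ) :
    thetaH p (ell (aGen ^ n * bGen ^ n)) = ⟨(p-1)*n, (p-1)*n, p*(p-1)*(n:ℤ)^2⟩ := by
  rw [theta_ell, map_mul, map_mul, map_pow, map_pow, map_pow, map_pow,
    phi_a, psi_a, phi_b, psi_b, Heis.xpow, Heis.ypow, Heis.xpow, Heis.ypow]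
  ext <;> simp <;> ring

lemma theta_cElt (p : ℤ) (n : ℕ) :
    thetaH p (cElt n) = ⟨0, 0, (1-p)*(n:ℤ)^2⟩ := by
  rw [cElt, map_mul, map_mul, map_inv, theta_ell_apow, theta_ell_bpow, theta_ell_abpow]
  ext <;> simp <;> ring

lemma theta_uE (p : ℤ) : thetaH p uE = ⟨p-1, 0, 0⟩ := by
  have h := theta_ell_apow p 1
  rw [pow_one] at h
  rw [uE, h]; ext <;> simp

lemma theta_vE (p : ℤ) : thetaH p vE = ⟨0, p-1, 0⟩ := by
  have h := theta_ell_bpow p 1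
  rw [pow_one] at h
  rw [vE, h]; ext <;> simp

lemma theta_tE (p : ℤ) : thetaH p tE = ⟨p-1, p-1, p*(p-1)⟩ := by
  have h := theta_ell_abpow p 1
  rw [pow_one, pow_one] at h
  rw [tE, h]; ext <;> simp

lemma theta_sE (p : ℤ) : thetaH p sE = ⟨0, 0, 1-p⟩ := by
  rw [sE, map_mul, map_mul, map_inv, theta_uE, theta_vE, theta_tE]
  ext <;> simp <;> ring

lemma theta_letter (p : ℤ) (x : SidkiDouble F2) (hx : x ∈ SL ∨ x⁻¹ ∈ SL) :
    ∃ a b σ : ℤ, thetaH p x = ⟨(p-1)*a, (p-1)*b, (p-1)*σ⟩ ∧ σ.natAbs ≤ 1 := by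
  have hSL : ∀ y : SidkiDouble F2, y ∈ SL →
      ∃ a b σ : ℤ, thetaH p y = ⟨(p-1)*a, (p-1)*b, (p-1)*σ⟩ ∧ σ.natAbs ≤ 1 ∧ a * b = 0 := by
    intro y hy
    rw [SL] at hy
    simp only [Set.mem_insert_iff, Set.mem_singleton_iff] at hy
    rcases hy with rfl | rfl | rfl
    · refine ⟨1, 0, 0, ?_, by simp, by simp⟩
      rw [← uE, theta_uE]; ext <;> simp
    · refine ⟨0, 1, 0, ?_, by simp, by simp⟩
      rw [← vE, theta_vE]; ext <;> simp
    · refine ⟨0, 0, -1, ?_, by simp, by simp⟩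
      rw [show ell aGen * ell bGen * (ell (aGen * bGen))⁻¹ = sE from rfl, theta_sE]
      ext <;> simp
  rcases hx with hx | hx
  · obtain ⟨a, b, σ, hE, hB, _⟩ := hSL x hx
    exact ⟨a, b, σ, hE, hB⟩
  · obtain ⟨a, b, σ, hE, hB, hab⟩ := hSL x⁻¹ hx
    refine ⟨-a, -b, -σ, ?_, by omega⟩
    have h2 : thetaH p x = (thetaH p x⁻¹)⁻¹ := by rw [map_inv, inv_inv]
    have hz : ((p-1)*a) * ((p-1)*b) = 0 := by
      rw [show ((p-1)*a) * ((p-1)*b) = (p-1)^2*(a*b) from by ring, hab, mul_zero]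
    rw [h2, hE]
    ext <;> simp [hz] <;> ring

end Statement10Aux
namespace Statement10Aux

lemma word_theta (p : ℤ) : ∀ l : List (SidkiDouble F2),
    (∀ x ∈ l, x ∈ SL ∨ x⁻¹ ∈ SL) →
    ∃ a b σ τ : ℤ, thetaH p l.prod = ⟨(p-1)*a, (p-1)*b, (p-1)*σ + (p-1)^2*τ⟩
      ∧ σ.natAbs ≤ l.length := by
  intro l
  induction l with
  | nil =>
    intro _
    exact ⟨0, 0, 0, 0, by rw [List.prod_nil, map_one]; ext <;> simp, by simp⟩
  | cons x l ih =>
    intro hlet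
    obtain ⟨a₀, b₀, σ₀, hx, hσ₀⟩ := theta_letter p x (hlet x (List.mem_cons_self))
    obtain ⟨a, b, σ, τ, hE, hB⟩ := ih (fun y hy => hlet y (List.mem_cons_of_mem x hy))
    refine ⟨a₀ + a, b₀ + b, σ₀ + σ, τ + a₀ * b, ?_, ?_⟩
    · rw [List.prod_cons, map_mul, hx, hE]
      ext <;> simp <;> ring
    · have h := Int.natAbs_add_le σ₀ σ
      simp only [List.length_cons]
      omega

lemma lower_bound (n : ℕ) (l : List (SidkiDouble F2))
    (hp : l.prod = cElt n) (hlet : ∀ x ∈ l, x ∈ SL ∨ x⁻¹ ∈ SL) :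
    n ^ 2 ≤ l.length := by
  by_contra hcon
  push_neg at hcon
  set p : ℤ := 2*(n:ℤ)^2 + 2 with hpdef
  obtain ⟨a, b, σ, τ, hE, hB⟩ := word_theta p l hlet
  rw [hp, theta_cElt] at hE
  have hz := congrArg Heis.z hE
  simp only at hz
  -- hz : (1-p)*n^2 = (p-1)*σ + (p-1)^2*τ
  have hq : (p - 1) = 2*(n:ℤ)^2 + 1 := by rw [hpdef]; ring
  have hcancel : -(n:ℤ)^2 = σ + (p-1)*τ := by
    have h1 : (p-1) * (-(n:ℤ)^2) = (p-1) * (σ + (p-1)*τ) := by ring_nf; ring_nf at hz; linarith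
    have h2 : (p-1) ≠ 0 := by rw [hq]; positivity
    exact mul_left_cancel₀ h2 h1
  have hσabs : |σ| < (n:ℤ)^2 := by
    have h3 : (σ.natAbs : ℤ) < ((n:ℤ))^2 := by
      have : (l.length : ℤ) < ((n:ℤ))^2 := by exact_mod_cast hcon
      omega
    rwa [Int.abs_eq_natAbs]
  have hτ : τ = 0 := by
    by_contra hτ0
    have h1 : 1 ≤ |τ| := Int.one_le_abs (by omega)
    have h2 : |(p-1)*τ| = (p-1) * |τ| := by
      rw [abs_mul, abs_of_pos (by rw [hq]; positivity)]
    have h3 : |(p-1)*τ| ≤ |(-(n:ℤ)^2)| + |σ| := by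
      have : (p-1)*τ = -(n:ℤ)^2 - σ := by linarith
      rw [this]
      exact abs_sub (-(n:ℤ)^2) σ
    have h4 : |(-(n:ℤ)^2)| = (n:ℤ)^2 := by
      rw [abs_neg, abs_of_nonneg (by positivity)]
    have h5 : (p-1) ≤ (p-1)*|τ| := le_mul_of_one_le_right (by rw [hq]; positivity) h1
    rw [hq] at h5
    rw [h2] at h3
    rw [h4] at h3
    rw [hq] at h3
    linarith
  rw [hτ, mul_zero, add_zero] at hcancel
  have : |σ| = (n:ℤ)^2 := by rw [← hcancel]; rw [abs_neg, abs_of_nonneg (by positivity)]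
  linarith

end Statement10Aux
namespace Statement10Aux

lemma cElt_word (n : ℕ) : cElt n = uE^n * (gB⁻¹)^n * (uE⁻¹)^n * gB^n := by
  have hu : uE^n = (gA^n)⁻¹ * gA'^n := by rw [uE_eq, (k1.inv_left).mul_pow, inv_pow]
  have h1 : ell (aGen^n) = (gA^n)⁻¹ * gA'^n := by rw [ell, map_pow, map_pow]; rfl
  have h2 : ell (bGen^n) = (gB^n)⁻¹ * gB'^n := by rw [ell, map_pow, map_pow]; rfl
  have h3 : ell (aGen^n*bGen^n) = (gA^n*gB^n)⁻¹*(gA'^n*gB'^n) := by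
    rw [ell, map_mul, map_mul, map_pow, map_pow, map_pow, map_pow]; rfl
  rw [cElt, h1, h2, h3]
  simp only [inv_pow, hu]
  group

noncomputable def upperList (n : ℕ) : List (SidkiDouble F2) :=
  List.replicate n uE ++ List.replicate n gB⁻¹ ++ List.replicate n uE⁻¹ ++ List.replicate n gB

lemma upperList_prod (n : ℕ) : (upperList n).prod = cElt n := by
  rw [upperList, List.prod_append, List.prod_append, List.prod_append,
    List.prod_replicate, List.prod_replicate, List.prod_replicate, List.prod_replicate,
    cElt_word]

lemma upperList_length (n : ℕ) : (upperList n).length = 4*n := by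
  simp [upperList]; omega

lemma uE_SX : uE ∈ SX := by
  rw [SX]; left; simp [SL, uE]

lemma gB_SX : gB ∈ SX := by
  rw [SX]; right; simp [gB]

lemma upperList_letters (n : ℕ) : ∀ x ∈ upperList n, x ∈ SX ∨ x⁻¹ ∈ SX := by
  intro x hx
  rw [upperList] at hx
  simp only [List.mem_append, List.mem_replicate] at hx
  rcases hx with ((⟨_, rfl⟩ | ⟨_, rfl⟩) | ⟨_, rfl⟩) | ⟨_, rfl⟩
  · exact Or.inl uE_SX
  · exact Or.inr (by rw [inv_inv]; exact gB_SX)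
  · exact Or.inr (by rw [inv_inv]; exact uE_SX)
  · exact Or.inl gB_SX

end Statement10Aux
namespace Statement10Aux

lemma cElt_mem_L (n : ℕ) : cElt n ∈ sidkiL F2 := by
  rw [cElt]
  exact mul_mem (mul_mem (ell_mem_L _) (ell_mem_L _)) (inv_mem (ell_mem_L _))

lemma exists_word {H : Type*} [Group H] {S : Set H} {x : H}
    (hx : x ∈ Subgroup.closure S) :
    ∃ l : List H, l.prod = x ∧ ∀ y ∈ l, y ∈ S ∨ y⁻¹ ∈ S := by
  have h2 : x ∈ Submonoid.closure (S ∪ S⁻¹) := by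
    rw [← Subgroup.closure_toSubmonoid]
    exact hx
  obtain ⟨l, hl, hp⟩ := Submonoid.exists_list_of_mem_closure h2
  refine ⟨l, hp, fun y hy => ?_⟩
  rcases hl y hy with h | h
  · exact Or.inl h
  · exact Or.inr (Set.mem_inv.mp h)

lemma genLength_le {H : Type*} [Group H] (S : Set H) (h : H) (l : List H)
    (hl : l.prod = h) (hlet : ∀ x ∈ l, x ∈ S ∨ x⁻¹ ∈ S) :
    genLength S h ≤ l.length :=
  Nat.sInf_le ⟨l, hl, rfl, hlet⟩

lemma genLength_SL_ge (n : ℕ) : n^2 ≤ genLength SL (cElt n) := by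
  have hmem : cElt n ∈ Subgroup.closure SL := by rw [part1]; exact cElt_mem_L n
  obtain ⟨l0, hprod0, hlet0⟩ := exists_word hmem
  have hne : {k | ∃ l : List (SidkiDouble F2),
      l.prod = cElt n ∧ l.length = k ∧ ∀ x ∈ l, x ∈ SL ∨ x⁻¹ ∈ SL}.Nonempty :=
    ⟨l0.length, l0, hprod0, rfl, hlet0⟩
  obtain ⟨l, hpl, hlen, hletl⟩ := Nat.sInf_mem hne
  have := lower_bound n l hpl hletl
  rw [genLength]
  omega

lemma SX_finite : SX.Finite := by
  rw [SX, SL]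
  apply Set.Finite.union
  · exact ((Set.finite_singleton _).insert _).insert _
  · exact (Set.finite_singleton _).insert _

lemma distLX_bdd (M : ℕ) :
    BddAbove {m | ∃ h ∈ sidkiL F2, genLength SX h ≤ M ∧ genLength SL h = m} := by
  classical
  set T : Set (SidkiDouble F2) := SX ∪ SX⁻¹ with hT
  have hTfin : T.Finite := SX_finite.union SX_finite.inv
  have : Finite ↥T := hTfin.to_subtype
  have hfin : ((fun l : List ↥T => (l.map Subtype.val).prod) '' {l | l.length ≤ M}).Finite :=
    ((List.finite_length_le ↥T M).image _)
  have hfin2 : ((genLength SL) ''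
      ((fun l : List ↥T => (l.map Subtype.val).prod) '' {l | l.length ≤ M})).Finite :=
    hfin.image _
  apply BddAbove.mono ?_ hfin2.bddAbove
  rintro m ⟨h, hmem, hSX, rfl⟩
  have hcl : h ∈ Subgroup.closure SX := by rw [part2]; trivial
  obtain ⟨l0, hprod0, hlet0⟩ := exists_word hcl
  have hne : {k | ∃ l : List (SidkiDouble F2),
      l.prod = h ∧ l.length = k ∧ ∀ x ∈ l, x ∈ SX ∨ x⁻¹ ∈ SX}.Nonempty :=
    ⟨l0.length, l0, hprod0, rfl, hlet0⟩
  obtain ⟨l, hpl, hlen, hletl⟩ := Nat.sInf_mem hne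
  have hgen : genLength SX h = sInf {k | ∃ l : List (SidkiDouble F2),
      l.prod = h ∧ l.length = k ∧ ∀ x ∈ l, x ∈ SX ∨ x⁻¹ ∈ SX} := rfl
  have hlM : l.length ≤ M := by rw [hlen, ← hgen]; exact hSX
  refine ⟨h, ⟨l.attach.map (fun y => (⟨y.1, ?_⟩ : ↥T)), ?_, ?_⟩, rfl⟩
  · rcases hletl y.1 y.2 with hy | hy
    · exact Set.mem_union_left _ hy
    · exact Set.mem_union_right _ (Set.mem_inv.mpr hy)
  · simpa using hlM
  · simp only [List.map_map]
    have : ((fun (y : ↥T) => y.1) ∘ (fun (y : {x // x ∈ l}) =>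
        (⟨y.1, by
          rcases hletl y.1 y.2 with hy | hy
          · exact Set.mem_union_left _ hy
          · exact Set.mem_union_right _ (Set.mem_inv.mpr hy)⟩ : ↥T)))
        = fun (y : {x // x ∈ l}) => y.1 := rfl
    rw [show ∀ f : {x // x ∈ l} → SidkiDouble F2,
      List.map f l.attach = List.map f l.attach from fun _ => rfl]
    simp [Function.comp]
    exact hpl

lemma distLX_ge (n : ℕ) (hn : 1 ≤ n) : n^2 ≤ distLX (6*n+6) := by
  rw [distLX]
  have hup : genLength SX (cElt n) ≤ 6*n+6 := by
    have := genLength_le SX (cElt n) (upperList n) (upperList_prod n) (upperList_letters n)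
    rw [upperList_length] at this
    omega
  have hmemset : genLength SL (cElt n) ∈
      {m | ∃ h ∈ sidkiL F2, genLength SX h ≤ 6*n+6 ∧ genLength SL h = m} :=
    ⟨cElt n, cElt_mem_L n, hup, rfl⟩
  exact le_trans (genLength_SL_ge n) (le_csSup (distLX_bdd (6*n+6)) hmemset)

end Statement10Aux
/-- `S_L` generates `L` and `S` generates `𝔛(F)`; for every `n ≥ 1` the
element `c_n` lies in `L`, is a product of at most `6n` elements of `S ∪ S⁻¹`, and is not a
product of fewer than `n²` elements of `S_L ∪ S_L⁻¹`. Consequently the distortion of `L`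
in `𝔛(F)` satisfies `dist(n) ≽ n²`. -/
theorem distortion_L_in_sidkiDouble_freeGroup :
    Subgroup.closure SL = sidkiL F2 ∧
    Subgroup.closure SX = ⊤ ∧
    (∀ n : ℕ, 1 ≤ n →
      cElt n ∈ sidkiL F2 ∧
      (∃ l : List (SidkiDouble F2), l.prod = cElt n ∧ l.length ≤ 6 * n ∧
        ∀ x ∈ l, x ∈ SX ∨ x⁻¹ ∈ SX) ∧
      (∀ l : List (SidkiDouble F2),
        l.prod = cElt n → (∀ x ∈ l, x ∈ SL ∨ x⁻¹ ∈ SL) → n ^ 2 ≤ l.length)) ∧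
    Preceq (fun n => n ^ 2) distLX := by
  refine ⟨Statement10Aux.part1, Statement10Aux.part2, ?_, ?_⟩
  · intro n hn
    refine ⟨Statement10Aux.cElt_mem_L n,
      ⟨Statement10Aux.upperList n, Statement10Aux.upperList_prod n, ?_,
        Statement10Aux.upperList_letters n⟩,
      fun l hp hl => Statement10Aux.lower_bound n l hp hl⟩
    rw [Statement10Aux.upperList_length]
    omega
  · refine ⟨6, by norm_num, fun n => ?_⟩
    rcases Nat.eq_zero_or_pos n with rfl | hn
    · simp
    · have h := Statement10Aux.distLX_ge n hn
      have he : 6 * n + 6 = 6 * n + 6 := rfl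
      calc n^2 ≤ distLX (6*n+6) := h
        _ ≤ 6 * distLX (6 * n + 6) + 6 * n + 6 := by omega

end Statement10
end

section
/- Let F be the free group on two generators a, b. For every n ≥ 1, if the commutator [aⁿ, bⁿ] is expressed in F as a product ∏_{i=1}^N θ_i⁻¹ [a,b]^{ε_i} θ_i with θ_i ∈ F and ε_i ∈ {1, −1}, then N ≥ n². -/
open scoped commutatorElement

/-- The integer Heisenberg group, used to detect the area of `[aⁿ,bⁿ]`. -/
@[ext] structure Heis where
  x : ℤ
  y : ℤ
  z : ℤ

namespace Heis

instance : Mul Heis := ⟨fun p q => ⟨p.x + q.x, p.y + q.y, p.z + q.z + p.x * q.y⟩⟩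
instance : One Heis := ⟨⟨0, 0, 0⟩⟩
instance : Inv Heis := ⟨fun p => ⟨-p.x, -p.y, p.x * p.y - p.z⟩⟩

@[simp] lemma mul_x (p q : Heis) : (p * q).x = p.x + q.x := rfl
@[simp] lemma mul_y (p q : Heis) : (p * q).y = p.y + q.y := rfl
@[simp] lemma mul_z (p q : Heis) : (p * q).z = p.z + q.z + p.x * q.y := rfl
@[simp] lemma one_x : (1 : Heis).x = 0 := rfl
@[simp] lemma one_y : (1 : Heis).y = 0 := rfl
@[simp] lemma one_z : (1 : Heis).z = 0 := rfl
@[simp] lemma inv_x (p : Heis) : p⁻¹.x = -p.x := rfl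
@[simp] lemma inv_y (p : Heis) : p⁻¹.y = -p.y := rfl
@[simp] lemma inv_z (p : Heis) : p⁻¹.z = p.x * p.y - p.z := rfl

instance : Group Heis where
  mul_assoc p q r := by ext <;> simp <;> ring
  one_mul p := by ext <;> simp
  mul_one p := by ext <;> simp
  inv_mul_cancel p := by ext <;> simp <;> ring

def X : Heis := ⟨1, 0, 0⟩
def Y : Heis := ⟨0, 1, 0⟩

@[simp] lemma X_pow (n : ℕ) : X ^ n = ⟨n, 0, 0⟩ := by
  induction n with
  | zero => rfl
  | succ k ih => rw [pow_succ, ih]; ext <;> simp [X] <;> push_cast <;> ring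

@[simp] lemma Y_pow (n : ℕ) : Y ^ n = ⟨0, n, 0⟩ := by
  induction n with
  | zero => rfl
  | succ k ih => rw [pow_succ, ih]; ext <;> simp [Y] <;> push_cast <;> ring

lemma comm_pow (n : ℕ) : ⁅X ^ n, Y ^ n⁆ = ⟨0, 0, (n : ℤ) ^ 2⟩ := by
  rw [commutatorElement_def]
  ext <;> simp <;> ring

lemma conj_center (g : Heis) (c : Heis) (hx : c.x = 0) (hy : c.y = 0) :
    g * c * g⁻¹ = c := by
  ext <;> simp [hx, hy] <;> ring

/-- The detecting homomorphism. -/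
noncomputable def φ : FreeGroup Bool →* Heis :=
  FreeGroup.lift (fun b => if b then Y else X)

@[simp] lemma φ_false : φ (FreeGroup.of false) = X := by simp [φ]
@[simp] lemma φ_true : φ (FreeGroup.of true) = Y := by simp [φ]

lemma prod_z_le (l : List Heis) (h : ∀ p ∈ l, p.x = 0 ∧ p.y = 0 ∧ p.z ≤ 1) :
    l.prod.z ≤ l.length := by
  induction l with
  | nil => simp
  | cons a t ih =>
    obtain ⟨hx, hy, hz⟩ := h a (by simp)
    have ht := ih (fun p hp => h p (by simp [hp]))
    simp [hx]
    push_cast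
    omega

end Heis

/-- In the free group on two generators `a, b`, the commutator `[aⁿ, bⁿ]`
cannot be written as a product of fewer than `n²` conjugates of `[a,b]^{±1}`. -/
theorem freeGroup_commutator_power_area (n : ℕ) (hn : 1 ≤ n) (N : ℕ)
    (θ : Fin N → FreeGroup Bool) (ε : Fin N → Bool)
    (h : ⁅(FreeGroup.of false) ^ n, (FreeGroup.of true) ^ n⁆ =
      (List.ofFn fun i => (θ i)⁻¹ *
        (if ε i then ⁅FreeGroup.of false, FreeGroup.of true⁆
         else ⁅FreeGroup.of false, FreeGroup.of true⁆⁻¹) * θ i).prod) :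
    n ^ 2 ≤ N := by
  have h2 := congrArg Heis.φ h
  rw [map_commutatorElement, map_pow, map_pow, Heis.φ_false, Heis.φ_true,
    Heis.comm_pow, map_list_prod] at h2
  have key : ((List.ofFn fun i => (θ i)⁻¹ *
      (if ε i then ⁅FreeGroup.of false, FreeGroup.of true⁆
       else ⁅FreeGroup.of false, FreeGroup.of true⁆⁻¹) * θ i).map Heis.φ).prod.z
      ≤ N := by
    have := Heis.prod_z_le ((List.ofFn fun i => (θ i)⁻¹ *
      (if ε i then ⁅FreeGroup.of false, FreeGroup.of true⁆
       else ⁅FreeGroup.of false, FreeGroup.of true⁆⁻¹) * θ i).map Heis.φ) ?_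
    · simpa using this
    · intro p hp
      simp only [List.mem_map, List.mem_ofFn] at hp
      obtain ⟨q, ⟨i, rfl⟩, rfl⟩ := hp
      have : Heis.φ ((θ i)⁻¹ *
          (if ε i then ⁅FreeGroup.of false, FreeGroup.of true⁆
           else ⁅FreeGroup.of false, FreeGroup.of true⁆⁻¹) * θ i)
          = (if ε i then (⟨0,0,1⟩ : Heis) else ⟨0,0,-1⟩) := by
        rw [map_mul, map_mul]
        have hc : Heis.φ (if ε i then ⁅FreeGroup.of false, FreeGroup.of true⁆
            else ⁅FreeGroup.of false, FreeGroup.of true⁆⁻¹)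
            = (if ε i then (⟨0,0,1⟩ : Heis) else ⟨0,0,-1⟩) := by
          cases ε i <;>
            simp [map_commutatorElement, commutatorElement_def] <;>
            ext <;> simp [Heis.X, Heis.Y]
        rw [hc, map_inv]
        have := Heis.conj_center (Heis.φ (θ i))⁻¹
          (if ε i then (⟨0,0,1⟩:Heis) else ⟨0,0,-1⟩) (by cases ε i <;> rfl)
          (by cases ε i <;> rfl)
        simpa using this
      rw [this]
      cases ε i <;> simp
  rw [← h2] at key
  have : ((n : ℤ)) ^ 2 ≤ (N : ℤ) := key
  exact_mod_cast this
end
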